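/- arXiv:1912.08872 — 8 statements merged into one kernel-verified Lean document; each statement's English description precedes it below -/
import Mathlib

section
/- Let C be a parsummable category and φ : {1,2} × ℕ → ℕ an injection. For disjointly supported objects x and y of C set φ♯_{x,y} := [1,φ¹]^x + [1,φ²]^y : φ_*(x,y) → x + y. Let x, y, z be objects of C with pairwise disjoint supports, and let f : x → x′ and g : y → y′ be morphisms with supp(x) ∩ supp(y) = ∅ and supp(x′) ∩ supp(y′) = ∅. Then: (i) φ♯_{x,0} = [1,φ¹]^x : φ_*(x,0) → x; (ii) φ♯_{x,y} ∘ τ_{y,x} = φ♯_{y,x} : φ_*(y,x) → y + x; (iii) φ♯_{x,y+z} ∘ φ_*(id_x, φ♯_{y,z}) ∘ α_{x,y,z} = φ♯_{x+y,z} ∘ φ_*(φ♯_{x,y}, id_z) as morphisms φ_*(φ_*(x,y),z) → x + y + z; (iv) (f + g) ∘ φ♯_{x,y} = φ♯_{x′,y′} ∘ φ_*(f,g). -/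
open CategoryTheory

/-- The monoid of injective self-maps of `U`, under composition. -/
def Minj (U : Type*) : Submonoid (Function.End U) where
  carrier := {f | Function.Injective f}
  mul_mem' := fun hf hg => hf.comp hg
  one_mem' := Function.injective_id

instance (U : Type*) : FunLike (Minj U) U U where
  coe u := u.1
  coe_injective := fun _ _ h => Subtype.ext h

@[simp] lemma Minj.mul_apply {U : Type*} (u v : Minj U) (a : U) : (u * v) a = u (v a) := rfl

/-- `x` is supported on `A` if every injection fixing `A` elementwise fixes `x`. -/
def Supported {U : Type*} {X : Type*} [MulAction (Minj U) X] (A : Set U) (x : X) : Prop :=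
  ∀ u : Minj U, (∀ a ∈ A, u a = a) → u • x = x

/-- `x` is finitely supported if it is supported on some finite subset of `U`. -/
def FinSupported {U : Type*} {X : Type*} [MulAction (Minj U) X] (x : X) : Prop :=
  ∃ A : Finset U, Supported (A : Set U) x

/-- The support of `x`: the intersection of all finite subsets of `U` on which `x`
is supported. -/
def supp {U : Type*} {X : Type*} [MulAction (Minj U) X] (x : X) : Set U :=
  {i : U | ∀ A : Finset U, Supported (A : Set U) x → i ∈ A}

/-- An `M(U)`-category: a category with an action of the injection monoid on objects,
together with coherent isomorphisms `ι u x : x ≅ u • x`. The action of `u` on morphisms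
is then given by conjugation with these isomorphisms. -/
structure MCat (U : Type*) (C : Type*) [Category C] [MulAction (Minj U) C] where
  ι : ∀ (u : Minj U) (x : C), x ≅ u • x
  ι_mul : ∀ (u v : Minj U) (x : C),
    (ι u x).hom ≫ (ι v (u • x)).hom = (ι (v * u) x).hom ≫ eqToHom (mul_smul v u x)

namespace MCat

variable {U : Type*} {C : Type*} [Category C] [MulAction (Minj U) C]

/-- The action `u_*` of an injection on morphisms: `u_*(f) = ι(u,y) ∘ f ∘ ι(u,x)⁻¹`. -/
def act (h : MCat U C) (u : Minj U) {x y : C} (f : x ⟶ y) : u • x ⟶ u • y :=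
  (h.ι u x).inv ≫ f ≫ (h.ι u y).hom

/-- The natural isomorphism `[v,u]^x := ι(v,x) ∘ ι(u,x)⁻¹ : u • x ⟶ v • x`. -/
def tw (h : MCat U C) (v u : Minj U) (x : C) : u • x ⟶ v • x :=
  (h.ι u x).inv ≫ (h.ι v x).hom

@[simp] lemma act_id (h : MCat U C) (u : Minj U) (x : C) : h.act u (𝟙 x) = 𝟙 (u • x) := by
  simp [act]

@[simp] lemma act_comp (h : MCat U C) (u : Minj U) {x y z : C} (f : x ⟶ y) (g : y ⟶ z) :
    h.act u (f ≫ g) = h.act u f ≫ h.act u g := by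
  simp [act]

lemma ι_natural (h : MCat U C) (u : Minj U) {x y : C} (f : x ⟶ y) :
    (h.ι u x).hom ≫ h.act u f = f ≫ (h.ι u y).hom := by
  simp [act]

end MCat

section ExtensionLemma

/-- Any map that is injective on a finite subset of `ℕ` agrees on that subset with a
permutation of `ℕ`. -/
lemma exists_perm_extend (s : Finset ℕ) (f : ℕ → ℕ) (hf : Set.InjOn f ↑s) :
    ∃ e : Equiv.Perm ℕ, ∀ a ∈ s, e a = f a := by
  classical
  have hSfin : (↑s : Set ℕ).Finite := s.finite_toSet
  have hTfin : (f '' ↑s).Finite := hSfin.image f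
  haveI : Infinite ↥(↑s : Set ℕ)ᶜ := hSfin.infinite_compl.to_subtype
  haveI : Infinite ↥(f '' ↑s)ᶜ := hTfin.infinite_compl.to_subtype
  obtain ⟨e₂⟩ : Nonempty (↥(↑s : Set ℕ)ᶜ ≃ ↥(f '' ↑s)ᶜ) := nonempty_equiv_of_countable
  let e₁ : ↥(↑s : Set ℕ) ≃ ↥(f '' ↑s) := Equiv.Set.imageOfInjOn f ↑s hf
  refine ⟨(Equiv.Set.sumCompl (↑s : Set ℕ)).symm.trans
    ((e₁.sumCongr e₂).trans (Equiv.Set.sumCompl (f '' ↑s))), fun a ha => ?_⟩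
  have ha' : a ∈ (↑s : Set ℕ) := ha
  have h3 : (Equiv.Set.sumCompl (↑s : Set ℕ)).symm a = Sum.inl ⟨a, ha'⟩ :=
    Equiv.Set.sumCompl_symm_apply_of_mem ha'
  simp only [Equiv.trans_apply, h3, Equiv.sumCongr_apply, Sum.map_inl,
    Equiv.Set.sumCompl_apply_inl]
  rfl

variable {X : Type*} [MulAction (Minj ℕ) X]

/-- Two injections agreeing on a finite supporting set act in the same way. -/
lemma smul_eq_smul_of_eqOn {x : X} {A : Finset ℕ}
    (hA : Supported (A : Set ℕ) x) {v w : Minj ℕ} (hvw : ∀ a ∈ A, v a = w a) :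
    v • x = w • x := by
  classical
  set f : ℕ → ℕ := fun b => if hb : b ∈ A.image ⇑v then (Finset.mem_image.mp hb).choose else b
    with hfdef
  have hspec : ∀ b ∈ A.image ⇑v, f b ∈ A ∧ v (f b) = b := by
    intro b hb
    have h1 := (Finset.mem_image.mp hb).choose_spec
    simp only [hfdef, dif_pos hb]
    exact h1
  have hinj : Set.InjOn f ↑(A.image ⇑v) := by
    intro b₁ hb₁ b₂ hb₂ hb
    have h1 := hspec b₁ hb₁
    have h2 := hspec b₂ hb₂
    rw [← h1.2, ← h2.2, hb]
  obtain ⟨e, he⟩ := exists_perm_extend (A.image ⇑v) f hinj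
  have heva : ∀ a ∈ A, e (v a) = a := by
    intro a ha
    have hmem : v a ∈ A.image ⇑v := Finset.mem_image_of_mem _ ha
    have h1 := hspec _ hmem
    have : e (v a) = f (v a) := he _ hmem
    rw [this]
    exact v.2 h1.2
  let γ : Minj ℕ := ⟨(e : ℕ → ℕ), e.injective⟩
  let γ' : Minj ℕ := ⟨(e.symm : ℕ → ℕ), e.symm.injective⟩
  have hγ : γ' * γ = 1 := Subtype.ext (funext fun n => e.symm_apply_apply n)
  have h1 : (γ * v) • x = x := hA (γ * v) (fun a ha => heva a ha)
  have h2 : (γ * w) • x = x := hA (γ * w) (fun a ha => by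
    show e (w a) = a
    rw [← hvw a ha]
    exact heva a ha)
  calc v • x = ((γ' * γ) * v) • x := by rw [hγ, one_mul]
    _ = γ' • ((γ * v) • x) := by rw [mul_assoc, mul_smul γ' (γ * v) x]
    _ = γ' • ((γ * w) • x) := by rw [h1, h2]
    _ = ((γ' * γ) * w) • x := by rw [mul_assoc, mul_smul γ' (γ * w) x]
    _ = w • x := by rw [hγ, one_mul]

/-- If `x` is supported on the finite set `A`, then `w • x` is supported on `w(A)`. -/
lemma supported_image {x : X} {A : Finset ℕ}
    (hA : Supported (A : Set ℕ) x) (w : Minj ℕ) :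
    Supported ((A.image ⇑w : Finset ℕ) : Set ℕ) (w • x) := by
  intro u hu
  rw [← mul_smul]
  exact smul_eq_smul_of_eqOn hA (fun a ha => hu (w a) (by
    exact_mod_cast Finset.mem_image_of_mem _ ha))

lemma supp_subset_of_supported {x : X} {A : Finset ℕ}
    (hA : Supported (A : Set ℕ) x) : supp (U := ℕ) x ⊆ ↑A :=
  fun _ hi => hi A hA

end ExtensionLemma

/-- Two elements are disjointly supported if their supports are disjoint. -/
def DisjSupp {X : Type*} [MulAction (Minj ℕ) X] (x y : X) : Prop :=
  Disjoint (supp (U := ℕ) x) (supp (U := ℕ) y)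

/-- A parsummable category: a tame `M(ℕ)`-category together with a distinguished object `0`
supported on the empty set and a sum operation, defined on disjointly supported objects and
morphisms, which is strictly unital, associative and commutative and strictly commutes with
the `M(ℕ)`-action. -/
structure ParSum (C : Type*) [Category C] [MulAction (Minj ℕ) C] extends MCat ℕ C where
  tame : ∀ x : C, FinSupported (U := ℕ) x
  zero : C
  supp_zero : Supported (∅ : Set ℕ) zero
  add : C → C → C
  addHom : ∀ {x x' y y' : C}, DisjSupp x x' → DisjSupp y y' →
    (x ⟶ y) → (x' ⟶ y') → (add x x' ⟶ add y y')
  addHom_id : ∀ {x x' : C} (h : DisjSupp x x'), addHom h h (𝟙 x) (𝟙 x') = 𝟙 (add x x')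
  addHom_comp : ∀ {x y z x' y' z' : C} (hx : DisjSupp x x') (hy : DisjSupp y y')
    (hz : DisjSupp z z') (f : x ⟶ y) (g : y ⟶ z) (f' : x' ⟶ y') (g' : y' ⟶ z'),
    addHom hx hz (f ≫ g) (f' ≫ g') = addHom hx hy f f' ≫ addHom hy hz g g'
  add_zero' : ∀ x : C, add x zero = x
  zero_add' : ∀ x : C, add zero x = x
  addHom_zero : ∀ {x y : C} (hx : DisjSupp x zero) (hy : DisjSupp y zero) (f : x ⟶ y),
    addHom hx hy f (𝟙 zero) = eqToHom (add_zero' x) ≫ f ≫ eqToHom (add_zero' y).symm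
  zero_addHom : ∀ {x y : C} (hx : DisjSupp zero x) (hy : DisjSupp zero y) (f : x ⟶ y),
    addHom hx hy (𝟙 zero) f = eqToHom (zero_add' x) ≫ f ≫ eqToHom (zero_add' y).symm
  add_comm' : ∀ {x y : C}, DisjSupp x y → add x y = add y x
  addHom_comm : ∀ {x y x' y' : C} (hx : DisjSupp x x') (hy : DisjSupp y y')
    (hx' : DisjSupp x' x) (hy' : DisjSupp y' y) (f : x ⟶ y) (f' : x' ⟶ y'),
    addHom hx' hy' f' f = eqToHom (add_comm' hx).symm ≫ addHom hx hy f f' ≫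
      eqToHom (add_comm' hy)
  add_assoc' : ∀ {x y z : C}, DisjSupp x y → DisjSupp y z → DisjSupp x z →
    add (add x y) z = add x (add y z)
  addHom_assoc : ∀ {x y z x' y' z' : C}
    (hxy : DisjSupp x y) (hyz : DisjSupp y z) (hxz : DisjSupp x z)
    (hxy' : DisjSupp x' y') (hyz' : DisjSupp y' z') (hxz' : DisjSupp x' z')
    (hs : DisjSupp (add x y) z) (hs' : DisjSupp (add x' y') z')
    (ht : DisjSupp x (add y z)) (ht' : DisjSupp x' (add y' z'))
    (f : x ⟶ x') (g : y ⟶ y') (k : z ⟶ z'),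
    addHom hs hs' (addHom hxy hxy' f g) k =
      eqToHom (add_assoc' hxy hyz hxz) ≫ addHom ht ht' f (addHom hyz hyz' g k) ≫
        eqToHom (add_assoc' hxy' hyz' hxz').symm
  smul_add : ∀ (u : Minj ℕ) {x y : C}, DisjSupp x y → u • add x y = add (u • x) (u • y)
  act_add : ∀ (u : Minj ℕ) {x x' y y' : C} (hx : DisjSupp x x') (hy : DisjSupp y y')
    (hux : DisjSupp (u • x) (u • x')) (huy : DisjSupp (u • y) (u • y'))
    (f : x ⟶ y) (f' : x' ⟶ y'),
    toMCat.act u (addHom hx hy f f') =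
      eqToHom (smul_add u hx) ≫ addHom hux huy (toMCat.act u f) (toMCat.act u f') ≫
        eqToHom (smul_add u hy).symm
  ι_add : ∀ (u : Minj ℕ) {x y : C} (hxy : DisjSupp x y) (hu : DisjSupp (u • x) (u • y)),
    (toMCat.ι u (add x y)).hom =
      addHom hxy hu (toMCat.ι u x).hom (toMCat.ι u y).hom ≫ eqToHom (smul_add u hxy).symm

section Phi

variable {C : Type*} [Category C] [MulAction (Minj ℕ) C]

/-- The component `φ^i = φ(i,-)` of an injection `φ : {1,2} × ℕ → ℕ`, as an element
of `M(ℕ)`. -/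
def phiC (φ : Fin 2 × ℕ → ℕ) (hφ : Function.Injective φ) (i : Fin 2) : Minj ℕ :=
  ⟨fun n => φ (i, n), fun _ _ hab => congrArg Prod.snd (hφ hab)⟩

lemma disjoint_phiC_ranges (φ : Fin 2 × ℕ → ℕ) (hφ : Function.Injective φ) :
    Disjoint (Set.range ⇑(phiC φ hφ 0)) (Set.range ⇑(phiC φ hφ 1)) := by
  rw [Set.disjoint_left]
  rintro b ⟨n, rfl⟩ ⟨m, hm⟩
  have h1 : (1 : Fin 2) = 0 := congrArg Prod.fst (hφ hm)
  exact absurd h1 (by decide)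

lemma range_mul_subset (u v : Minj ℕ) : Set.range ⇑(u * v) ⊆ Set.range ⇑u := by
  rintro b ⟨a, rfl⟩
  exact ⟨v a, rfl⟩

lemma range_mul_disjoint (u : Minj ℕ) {v w : Minj ℕ}
    (hd : Disjoint (Set.range ⇑v) (Set.range ⇑w)) :
    Disjoint (Set.range ⇑(u * v)) (Set.range ⇑(u * w)) := by
  rw [Set.disjoint_left] at hd ⊢
  rintro b ⟨a, rfl⟩ ⟨a', ha'⟩
  exact hd ⟨a, rfl⟩ ⟨a', u.2 ha'⟩

namespace ParSum

lemma supp_smul_subset (h : ParSum C) (w : Minj ℕ) (x : C) :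
    supp (U := ℕ) (w • x) ⊆ Set.range ⇑w := by
  obtain ⟨A, hA⟩ := h.tame x
  intro i hi
  have := hi (A.image ⇑w) (supported_image hA w)
  obtain ⟨a, _, rfl⟩ := Finset.mem_image.mp this
  exact ⟨a, rfl⟩

/-- Objects moved into disjoint ranges are disjointly supported. -/
lemma disj_smul (h : ParSum C) {w w' : Minj ℕ}
    (hd : Disjoint (Set.range ⇑w) (Set.range ⇑w')) (x y : C) :
    DisjSupp (w • x) (w' • y) :=
  Disjoint.mono (h.supp_smul_subset w x) (h.supp_smul_subset w' y) hd

lemma supported_add_finset (h : ParSum C) {x y : C} (hd : DisjSupp x y) {A B : Finset ℕ}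
    (hx : Supported (A : Set ℕ) x) (hy : Supported (B : Set ℕ) y) :
    Supported ((A ∪ B : Finset ℕ) : Set ℕ) (h.add x y) := by
  intro u hu
  rw [h.smul_add u hd, hx u (fun a ha => hu a (by simp [ha])),
    hy u (fun a ha => hu a (by simp [ha]))]

lemma supp_add_subset (h : ParSum C) {x y : C} (hd : DisjSupp x y) :
    supp (U := ℕ) (h.add x y) ⊆ supp (U := ℕ) x ∪ supp (U := ℕ) y := by
  intro i hi
  by_contra hc
  simp only [Set.mem_union, not_or] at hc
  obtain ⟨hcx, hcy⟩ := hc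
  simp only [supp, Set.mem_setOf_eq, not_forall] at hcx hcy
  obtain ⟨A', hA', hiA'⟩ := hcx
  obtain ⟨B', hB', hiB'⟩ := hcy
  have := hi (A' ∪ B') (h.supported_add_finset hd hA' hB')
  simp only [Finset.mem_union] at this
  tauto

lemma supp_add_smul_subset (h : ParSum C) (u v : Minj ℕ)
    (hd : Disjoint (Set.range ⇑u) (Set.range ⇑v)) (x y : C) :
    supp (U := ℕ) (h.add (u • x) (v • y)) ⊆ Set.range ⇑u ∪ Set.range ⇑v := by
  intro i hi
  have := h.supp_add_subset (h.disj_smul hd x y) hi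
  rcases this with hl | hr
  · exact Or.inl (h.supp_smul_subset u x hl)
  · exact Or.inr (h.supp_smul_subset v y hr)

lemma smul_zero' (h : ParSum C) (u : Minj ℕ) : u • h.zero = h.zero :=
  h.supp_zero u (fun a ha => absurd ha (Set.notMem_empty a))

lemma supp_zero_subset (h : ParSum C) : supp (U := ℕ) h.zero ⊆ (∅ : Set ℕ) := by
  intro i hi
  have := hi ∅ (by intro u _; exact h.smul_zero' u)
  simp at this

lemma disj_zero_right (h : ParSum C) (x : C) : DisjSupp x h.zero :=
  Disjoint.mono_right h.supp_zero_subset (by simp)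

lemma disj_zero_left (h : ParSum C) (x : C) : DisjSupp h.zero x :=
  Disjoint.mono_left h.supp_zero_subset (by simp)

end ParSum

end Phi

section MonDefs

variable {C : Type*} [Category C] [MulAction (Minj ℕ) C]

/-- The tensor product `φ_*(x,y) = φ¹ • x + φ² • y` on objects. -/
def Fobj (h : ParSum C) (φ : Fin 2 × ℕ → ℕ) (hφ : Function.Injective φ) (x y : C) : C := h.add (phiC φ hφ 0 • x) (phiC φ hφ 1 • y)

lemma d12 (h : ParSum C) (φ : Fin 2 × ℕ → ℕ) (hφ : Function.Injective φ) (x y : C) : DisjSupp (phiC φ hφ 0 • x) (phiC φ hφ 1 • y) :=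
  h.disj_smul (disjoint_phiC_ranges φ hφ) x y

lemma d21 (h : ParSum C) (φ : Fin 2 × ℕ → ℕ) (hφ : Function.Injective φ) (x y : C) : DisjSupp (phiC φ hφ 1 • x) (phiC φ hφ 0 • y) :=
  h.disj_smul (disjoint_phiC_ranges φ hφ).symm x y

/-- The tensor product `φ_*(f,g) = φ¹_*(f) + φ²_*(g)` on morphisms. -/
def Fhom (h : ParSum C) (φ : Fin 2 × ℕ → ℕ) (hφ : Function.Injective φ) {x x' y y' : C} (f : x ⟶ x') (g : y ⟶ y') :
    Fobj h φ hφ x y ⟶ Fobj h φ hφ x' y' :=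
  h.addHom (d12 h φ hφ x y) (d12 h φ hφ x' y')
    (h.toMCat.act (phiC φ hφ 0) f) (h.toMCat.act (phiC φ hφ 1) g)

/-- The symmetry isomorphism `τ_{x,y} = [φ∘t, φ]^{x,y} : φ_*(x,y) ⟶ φ_*(y,x)`. -/
def braiding (h : ParSum C) (φ : Fin 2 × ℕ → ℕ) (hφ : Function.Injective φ) (x y : C) : Fobj h φ hφ x y ⟶ Fobj h φ hφ y x :=
  h.addHom (d12 h φ hφ x y) (d21 h φ hφ x y)
    (h.toMCat.tw (phiC φ hφ 1) (phiC φ hφ 0) x) (h.toMCat.tw (phiC φ hφ 0) (phiC φ hφ 1) y) ≫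
    eqToHom (h.add_comm' (d21 h φ hφ x y))

lemma zero_right_eq (h : ParSum C) (φ : Fin 2 × ℕ → ℕ) (hφ : Function.Injective φ) (x : C) : phiC φ hφ 0 • x = Fobj h φ hφ x h.zero := by
  show _ = h.add _ _
  rw [h.smul_zero' (phiC φ hφ 1), h.add_zero']

lemma zero_left_eq (h : ParSum C) (φ : Fin 2 × ℕ → ℕ) (hφ : Function.Injective φ) (x : C) : phiC φ hφ 1 • x = Fobj h φ hφ h.zero x := by
  show _ = h.add _ _
  rw [h.smul_zero' (phiC φ hφ 0), h.zero_add']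

/-- The right unit isomorphism `[φ¹,1]^x : x ⟶ φ_*(x,0)`. -/
def rightUnitor (h : ParSum C) (φ : Fin 2 × ℕ → ℕ) (hφ : Function.Injective φ) (x : C) : x ⟶ Fobj h φ hφ x h.zero :=
  eqToHom (one_smul (Minj ℕ) x).symm ≫ h.toMCat.tw (phiC φ hφ 0) 1 x ≫
    eqToHom (zero_right_eq h φ hφ x)

/-- The left unit isomorphism `[φ²,1]^x : x ⟶ φ_*(0,x)`. -/
def leftUnitor (h : ParSum C) (φ : Fin 2 × ℕ → ℕ) (hφ : Function.Injective φ) (x : C) : x ⟶ Fobj h φ hφ h.zero x :=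
  eqToHom (one_smul (Minj ℕ) x).symm ≫ h.toMCat.tw (phiC φ hφ 1) 1 x ≫
    eqToHom (zero_left_eq h φ hφ x)

lemma d00_01 (h : ParSum C) (φ : Fin 2 × ℕ → ℕ) (hφ : Function.Injective φ) (x y : C) :
    DisjSupp ((phiC φ hφ 0 * phiC φ hφ 0) • x) ((phiC φ hφ 0 * phiC φ hφ 1) • y) :=
  h.disj_smul (range_mul_disjoint _ (disjoint_phiC_ranges φ hφ)) x y

lemma d10_11 (h : ParSum C) (φ : Fin 2 × ℕ → ℕ) (hφ : Function.Injective φ) (y z : C) :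
    DisjSupp ((phiC φ hφ 1 * phiC φ hφ 0) • y) ((phiC φ hφ 1 * phiC φ hφ 1) • z) :=
  h.disj_smul (range_mul_disjoint _ (disjoint_phiC_ranges φ hφ)) y z

lemma d0_10 (h : ParSum C) (φ : Fin 2 × ℕ → ℕ) (hφ : Function.Injective φ) (x y : C) : DisjSupp (phiC φ hφ 0 • x) ((phiC φ hφ 1 * phiC φ hφ 0) • y) :=
  h.disj_smul (Disjoint.mono_right (range_mul_subset _ _) (disjoint_phiC_ranges φ hφ)) x y

lemma d0_11 (h : ParSum C) (φ : Fin 2 × ℕ → ℕ) (hφ : Function.Injective φ) (x z : C) : DisjSupp (phiC φ hφ 0 • x) ((phiC φ hφ 1 * phiC φ hφ 1) • z) :=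
  h.disj_smul (Disjoint.mono_right (range_mul_subset _ _) (disjoint_phiC_ranges φ hφ)) x z

lemma dI1 (h : ParSum C) (φ : Fin 2 × ℕ → ℕ) (hφ : Function.Injective φ) (x y z : C) :
    DisjSupp (h.add ((phiC φ hφ 0 * phiC φ hφ 0) • x) ((phiC φ hφ 0 * phiC φ hφ 1) • y))
      (phiC φ hφ 1 • z) := by
  have h1 : supp (U := ℕ)
      (h.add ((phiC φ hφ 0 * phiC φ hφ 0) • x) ((phiC φ hφ 0 * phiC φ hφ 1) • y)) ⊆
      Set.range ⇑(phiC φ hφ 0) := by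
    intro i hi
    rcases h.supp_add_smul_subset _ _ (range_mul_disjoint _ (disjoint_phiC_ranges φ hφ)) x y hi
      with h2 | h2
    · exact range_mul_subset _ _ h2
    · exact range_mul_subset _ _ h2
  exact Disjoint.mono h1 (h.supp_smul_subset _ z) (disjoint_phiC_ranges φ hφ)

lemma dI2 (h : ParSum C) (φ : Fin 2 × ℕ → ℕ) (hφ : Function.Injective φ) (x y z : C) :
    DisjSupp (h.add (phiC φ hφ 0 • x) ((phiC φ hφ 1 * phiC φ hφ 0) • y))
      ((phiC φ hφ 1 * phiC φ hφ 1) • z) := by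
  have h1 : supp (U := ℕ)
      (h.add (phiC φ hφ 0 • x) ((phiC φ hφ 1 * phiC φ hφ 0) • y)) ⊆
      Set.range ⇑(phiC φ hφ 0) ∪ Set.range ⇑(phiC φ hφ 1 * phiC φ hφ 0) := by
    intro i hi
    exact h.supp_add_smul_subset _ _
      (Disjoint.mono_right (range_mul_subset _ _) (disjoint_phiC_ranges φ hφ)) x y hi
  refine Disjoint.mono h1 (h.supp_smul_subset _ z) (Set.disjoint_union_left.mpr ⟨?_, ?_⟩)
  · exact Disjoint.mono_right (range_mul_subset _ _) (disjoint_phiC_ranges φ hφ)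
  · exact range_mul_disjoint _ (disjoint_phiC_ranges φ hφ)

lemma dI3 (h : ParSum C) (φ : Fin 2 × ℕ → ℕ) (hφ : Function.Injective φ) (x y z : C) :
    DisjSupp (phiC φ hφ 0 • x)
      (h.add ((phiC φ hφ 1 * phiC φ hφ 0) • y) ((phiC φ hφ 1 * phiC φ hφ 1) • z)) := by
  have h1 : supp (U := ℕ)
      (h.add ((phiC φ hφ 1 * phiC φ hφ 0) • y) ((phiC φ hφ 1 * phiC φ hφ 1) • z)) ⊆
      Set.range ⇑(phiC φ hφ 1) := by
    intro i hi
    rcases h.supp_add_smul_subset _ _ (range_mul_disjoint _ (disjoint_phiC_ranges φ hφ)) y z hi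
      with h2 | h2
    · exact range_mul_subset _ _ h2
    · exact range_mul_subset _ _ h2
  exact Disjoint.mono (h.supp_smul_subset _ x) h1 (disjoint_phiC_ranges φ hφ)

lemma assocSrc_eq (h : ParSum C) (φ : Fin 2 × ℕ → ℕ) (hφ : Function.Injective φ) (x y z : C) :
    Fobj h φ hφ (Fobj h φ hφ x y) z =
      h.add (h.add ((phiC φ hφ 0 * phiC φ hφ 0) • x) ((phiC φ hφ 0 * phiC φ hφ 1) • y))
        (phiC φ hφ 1 • z) := by
  show h.add (phiC φ hφ 0 • h.add (phiC φ hφ 0 • x) (phiC φ hφ 1 • y)) (phiC φ hφ 1 • z) = _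
  rw [h.smul_add (phiC φ hφ 0) (d12 h φ hφ x y), ← mul_smul, ← mul_smul]

lemma assocTgt_eq (h : ParSum C) (φ : Fin 2 × ℕ → ℕ) (hφ : Function.Injective φ) (x y z : C) :
    Fobj h φ hφ x (Fobj h φ hφ y z) =
      h.add (phiC φ hφ 0 • x)
        (h.add ((phiC φ hφ 1 * phiC φ hφ 0) • y) ((phiC φ hφ 1 * phiC φ hφ 1) • z)) := by
  show h.add (phiC φ hφ 0 • x) (phiC φ hφ 1 • h.add (phiC φ hφ 0 • y) (phiC φ hφ 1 • z)) = _
  rw [h.smul_add (phiC φ hφ 1) (d12 h φ hφ y z), ← mul_smul, ← mul_smul]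

lemma assocMid_eq (h : ParSum C) (φ : Fin 2 × ℕ → ℕ) (hφ : Function.Injective φ) (x y z : C) :
    h.add (h.add (phiC φ hφ 0 • x) ((phiC φ hφ 1 * phiC φ hφ 0) • y))
        ((phiC φ hφ 1 * phiC φ hφ 1) • z) =
      h.add (phiC φ hφ 0 • x)
        (h.add ((phiC φ hφ 1 * phiC φ hφ 0) • y) ((phiC φ hφ 1 * phiC φ hφ 1) • z)) :=
  h.add_assoc' (d0_10 h φ hφ x y) (d10_11 h φ hφ y z) (d0_11 h φ hφ x z)

/-- The associativity isomorphism
`α_{x,y,z} = [φ(1⊔φ), φ(φ⊔1)]^{x,y,z} : φ_*(φ_*(x,y),z) ⟶ φ_*(x,φ_*(y,z))`. -/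
def phiAssociator (h : ParSum C) (φ : Fin 2 × ℕ → ℕ) (hφ : Function.Injective φ) (x y z : C) :
    Fobj h φ hφ (Fobj h φ hφ x y) z ⟶ Fobj h φ hφ x (Fobj h φ hφ y z) :=
  eqToHom (assocSrc_eq h φ hφ x y z) ≫
    h.addHom (dI1 h φ hφ x y z) (dI2 h φ hφ x y z)
      (h.addHom (d00_01 h φ hφ x y) (d0_10 h φ hφ x y)
        (h.toMCat.tw (phiC φ hφ 0) (phiC φ hφ 0 * phiC φ hφ 0) x)
        (h.toMCat.tw (phiC φ hφ 1 * phiC φ hφ 0) (phiC φ hφ 0 * phiC φ hφ 1) y))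
      (h.toMCat.tw (phiC φ hφ 1 * phiC φ hφ 1) (phiC φ hφ 1) z) ≫
    eqToHom ((assocMid_eq h φ hφ x y z).trans (assocTgt_eq h φ hφ x y z).symm)

end MonDefs

/-- The morphism `[1,w]^x : w • x ⟶ x` (using `ι(1,x) = id`). -/
def toId {C : Type*} [Category C] [MulAction (Minj ℕ) C] (h : ParSum C) (w : Minj ℕ)
    (x : C) : w • x ⟶ x :=
  h.toMCat.tw 1 w x ≫ eqToHom (one_smul (Minj ℕ) x)

/-- The canonical comparison `φ♯_{x,y} = [1,φ¹]^x + [1,φ²]^y : φ_*(x,y) ⟶ x + y` for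
disjointly supported `x` and `y`. -/
def sharp {C : Type*} [Category C] [MulAction (Minj ℕ) C] (h : ParSum C)
    (φ : Fin 2 × ℕ → ℕ) (hφ : Function.Injective φ) (x y : C) (hxy : DisjSupp x y) :
    Fobj h φ hφ x y ⟶ h.add x y :=
  h.addHom (d12 h φ hφ x y) hxy (toId h (phiC φ hφ 0) x) (toId h (phiC φ hφ 1) y)

lemma disj_add_right {C : Type*} [Category C] [MulAction (Minj ℕ) C] (h : ParSum C)
    {x y z : C} (hxy : DisjSupp x y) (hyz : DisjSupp y z) (hxz : DisjSupp x z) :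
    DisjSupp x (h.add y z) :=
  Disjoint.mono_right (h.supp_add_subset hyz) (Set.disjoint_union_right.mpr ⟨hxy, hxz⟩)

lemma disj_add_left {C : Type*} [Category C] [MulAction (Minj ℕ) C] (h : ParSum C)
    {x y z : C} (hxy : DisjSupp x y) (hyz : DisjSupp y z) (hxz : DisjSupp x z) :
    DisjSupp (h.add x y) z :=
  Disjoint.mono_left (h.supp_add_subset hxy) (Set.disjoint_union_left.mpr ⟨hxz, hyz⟩)

/-! Since `ι(1,x)` is the identity, `[1,u]^x = ι(u,x)⁻¹`. These morphisms are natural in `x`,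
additive, trivial on `0` and satisfy `[1,v]^x ∘ [v,u]^x = [1,u]^x` and
`[1,v]^x ∘ [1,u]^{v•x} = [1,uv]^x`. Both sides of each identity then collapse to the same sum of
morphisms `[1,w]^-`, strict associativity and commutativity of `+` lining the summands up. -/

namespace MCat

variable {U C : Type*} [Category C] [MulAction (Minj U) C] (h : MCat U C)

lemma ι_hom_eq_of_eq (u : Minj U) {x y : C} (e : x = y) :
    (h.ι u x).hom = eqToHom e ≫ (h.ι u y).hom ≫ eqToHom (congrArg (u • ·) e.symm) := by
  subst e; simp

lemma ι_one_hom (x : C) : (h.ι 1 x).hom = eqToHom (one_smul (Minj U) x).symm := by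
  have hmul : (h.ι 1 x).hom ≫ (h.ι 1 ((1 : Minj U) • x)).hom =
      (h.ι 1 x).hom ≫ eqToHom (mul_smul (1 : Minj U) 1 x) := h.ι_mul 1 1 x
  rw [h.ι_hom_eq_of_eq 1 (one_smul (Minj U) x), Iso.cancel_iso_hom_left, eqToHom_comp_iff,
    comp_eqToHom_iff] at hmul
  simpa using hmul

end MCat

namespace ParSum

variable {C : Type*} [Category C] [MulAction (Minj ℕ) C] (h : ParSum C)

lemma addHom_eqToHom {x x' y y' : C} (hx : DisjSupp x x') (hy : DisjSupp y y') (e : x = y)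
    (e' : x' = y') : h.addHom hx hy (eqToHom e) (eqToHom e') = eqToHom (by rw [e, e']) := by
  subst e e'
  exact h.addHom_id hx

lemma addHom_eqToHom_comp_left {w x x' y y' : C} (hw : DisjSupp w x') (hx : DisjSupp x x')
    (hy : DisjSupp y y') (e : w = x) (f : x ⟶ y) (g : x' ⟶ y') :
    h.addHom hw hy (eqToHom e ≫ f) g = eqToHom (by rw [e]) ≫ h.addHom hx hy f g := by
  subst e; simp

lemma addHom_eqToHom_comp_right {w x x' y y' : C} (hw : DisjSupp x w) (hx : DisjSupp x x')
    (hy : DisjSupp y y') (e : w = x') (f : x ⟶ y) (g : x' ⟶ y') :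
    h.addHom hw hy f (eqToHom e ≫ g) = eqToHom (by rw [e]) ≫ h.addHom hx hy f g := by
  subst e; simp

lemma addHom_eqToHom_zero {x y p : C} (hx : DisjSupp x p) (hy : DisjSupp y h.zero)
    (f : x ⟶ y) (e : p = h.zero) :
    h.addHom hx hy f (eqToHom e) =
      eqToHom (by rw [e, h.add_zero']) ≫ f ≫ eqToHom (h.add_zero' y).symm := by
  subst e
  simpa using h.addHom_zero hx hy f

lemma addHom_assoc_symm {x y z x' y' z' : C}
    (hxy : DisjSupp x y) (hyz : DisjSupp y z) (hxz : DisjSupp x z)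
    (hxy' : DisjSupp x' y') (hyz' : DisjSupp y' z') (hxz' : DisjSupp x' z')
    (hs : DisjSupp (h.add x y) z) (hs' : DisjSupp (h.add x' y') z')
    (ht : DisjSupp x (h.add y z)) (ht' : DisjSupp x' (h.add y' z'))
    (f : x ⟶ x') (g : y ⟶ y') (k : z ⟶ z') :
    h.addHom ht ht' f (h.addHom hyz hyz' g k) =
      eqToHom (h.add_assoc' hxy hyz hxz).symm ≫ h.addHom hs hs' (h.addHom hxy hxy' f g) k ≫
        eqToHom (h.add_assoc' hxy' hyz' hxz') := by
  simp [h.addHom_assoc hxy hyz hxz hxy' hyz' hxz' hs hs' ht ht' f g k]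

-- Since `0 + 0 = 0`, the additivity of `ι` makes `ι(u,0)` an idempotent isomorphism.
lemma ι_zero_hom (u : Minj ℕ) : (h.ι u h.zero).hom = eqToHom (h.smul_zero' u).symm := by
  set e := h.smul_zero' u
  set σ : h.zero ⟶ h.zero := (h.ι u h.zero).hom ≫ eqToHom e with hσ
  have hd : DisjSupp h.zero h.zero := h.disj_zero_right h.zero
  have hud : DisjSupp (u • h.zero) (u • h.zero) := by rw [e]; exact hd
  have hsq : h.addHom hd hd σ σ =
      eqToHom (h.add_zero' h.zero) ≫ σ ≫ σ ≫ eqToHom (h.add_zero' h.zero).symm := by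
    have hsplit := h.addHom_comp hd hd hd σ (𝟙 _) (𝟙 _) σ
    rw [Category.comp_id, Category.id_comp] at hsplit
    rw [hsplit, h.addHom_zero, h.zero_addHom]
    simp
  have hlin : h.addHom hd hd σ σ =
      eqToHom (h.add_zero' h.zero) ≫ σ ≫ eqToHom (h.add_zero' h.zero).symm := by
    rw [hσ, h.addHom_comp hd hud hd, h.addHom_eqToHom,
      (comp_eqToHom_iff _ _ _).mp (h.ι_add u hd hud).symm,
      h.ι_hom_eq_of_eq u (h.add_zero' h.zero)]
    simp
  have hidem : σ ≫ σ = σ ≫ 𝟙 _ := by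
    have := hsq.symm.trans hlin
    rw [cancel_epi, ← Category.assoc, cancel_mono] at this
    rw [this, Category.comp_id]
  have hσ1 : σ = 𝟙 _ := (cancel_epi σ).mp hidem
  rw [hσ, comp_eqToHom_iff, Category.id_comp] at hσ1
  exact hσ1

end ParSum

section toId

variable {C : Type*} [Category C] [MulAction (Minj ℕ) C] (h : ParSum C)

lemma toId_eq_ι_inv (u : Minj ℕ) (x : C) : toId h u x = (h.ι u x).inv := by
  simp [toId, MCat.tw, h.ι_one_hom x]

lemma tw_comp_toId (u v : Minj ℕ) (x : C) : h.tw v u x ≫ toId h v x = toId h u x := by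
  simp [toId_eq_ι_inv, MCat.tw]

lemma toId_naturality (u : Minj ℕ) {x x' : C} (f : x ⟶ x') :
    toId h u x ≫ f = h.act u f ≫ toId h u x' := by
  simp [toId_eq_ι_inv, MCat.act]

lemma toId_smul_comp_toId (u v : Minj ℕ) (x : C) :
    toId h u (v • x) ≫ toId h v x = eqToHom (mul_smul u v x).symm ≫ toId h (u * v) x := by
  rw [toId_eq_ι_inv, toId_eq_ι_inv, toId_eq_ι_inv, Iso.inv_comp_eq, ← Category.assoc,
    Iso.eq_comp_inv, Iso.inv_comp_eq, ← Category.assoc, h.ι_mul v u x]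
  simp

lemma toId_add (u : Minj ℕ) {x y : C} (hxy : DisjSupp x y) (hu : DisjSupp (u • x) (u • y)) :
    toId h u (h.add x y) =
      eqToHom (h.smul_add u hxy) ≫ h.addHom hu hxy (toId h u x) (toId h u y) := by
  rw [toId_eq_ι_inv]
  refine Iso.inv_ext ?_
  rw [h.ι_add u hxy hu, Category.assoc, eqToHom_trans_assoc, eqToHom_refl, Category.id_comp,
    ← h.addHom_comp, toId_eq_ι_inv, toId_eq_ι_inv, Iso.hom_inv_id, Iso.hom_inv_id, h.addHom_id]

lemma toId_zero (u : Minj ℕ) : toId h u h.zero = eqToHom (h.smul_zero' u) := by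
  rw [toId_eq_ι_inv]
  exact Iso.inv_ext (by simp [h.ι_zero_hom u])

lemma toId_comp_addHom_toId (u v w : Minj ℕ) {x y : C} (hxy : DisjSupp x y)
    (hvw : DisjSupp (v • x) (w • y)) (huvw : DisjSupp ((u * v) • x) ((u * w) • y)) :
    toId h u (h.add (v • x) (w • y)) ≫ h.addHom hvw hxy (toId h v x) (toId h w y) =
      eqToHom (by rw [h.smul_add u hvw, mul_smul, mul_smul]) ≫
        h.addHom huvw hxy (toId h (u * v) x) (toId h (u * w) y) := by
  have hu : DisjSupp (u • v • x) (u • w • y) := by rwa [← mul_smul, ← mul_smul]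
  rw [toId_add h u hvw hu, Category.assoc, ← h.addHom_comp, toId_smul_comp_toId,
    toId_smul_comp_toId, h.addHom_eqToHom_comp_left _ (by rwa [← mul_smul]),
    h.addHom_eqToHom_comp_right _ huvw]
  simp

end toId

-- Dot notation `hxy.symm` would produce `Disjoint.symm hxy`, whose type is not syntactically a
-- `DisjSupp`; rewriting under `addHom` then fails to typecheck its motive.
lemma disjSupp_symm {X : Type*} [MulAction (Minj ℕ) X] {x y : X} (hxy : DisjSupp x y) :
    DisjSupp y x :=
  Disjoint.symm hxy

section sharp

variable {C : Type*} [Category C] [MulAction (Minj ℕ) C] (h : ParSum C)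
  (φ : Fin 2 × ℕ → ℕ) (hφ : Function.Injective φ)

lemma sharp_zero_right (x : C) :
    sharp h φ hφ x h.zero (h.disj_zero_right x) =
      eqToHom (zero_right_eq h φ hφ x).symm ≫ toId h (phiC φ hφ 0) x ≫
        eqToHom (h.add_zero' x).symm := by
  rw [sharp, toId_zero, h.addHom_eqToHom_zero]
  rfl

lemma braiding_comp_sharp {x y : C} (hxy : DisjSupp x y) :
    braiding h φ hφ y x ≫ sharp h φ hφ x y hxy =
      sharp h φ hφ y x (disjSupp_symm hxy) ≫ eqToHom (h.add_comm' (disjSupp_symm hxy)) := by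
  unfold braiding sharp Fobj
  rw [h.addHom_comm (d21 h φ hφ y x) (disjSupp_symm hxy) (d12 h φ hφ x y) hxy]
  simp only [Category.assoc, eqToHom_trans_assoc, eqToHom_refl, Category.id_comp]
  rw [← Category.assoc, ← h.addHom_comp, tw_comp_toId, tw_comp_toId]

lemma sharp_naturality {x y x' y' : C} (f : x ⟶ x') (g : y ⟶ y') (hxy : DisjSupp x y)
    (hxy' : DisjSupp x' y') :
    sharp h φ hφ x y hxy ≫ h.addHom hxy hxy' f g = Fhom h φ hφ f g ≫ sharp h φ hφ x' y' hxy' := by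
  unfold sharp Fhom Fobj
  rw [← h.addHom_comp, ← h.addHom_comp, toId_naturality, toId_naturality]

lemma Fhom_id_sharp_comp_sharp {x y z : C} (hxy : DisjSupp x y) (hyz : DisjSupp y z)
    (hxz : DisjSupp x z) :
    Fhom h φ hφ (𝟙 x) (sharp h φ hφ y z hyz) ≫
        sharp h φ hφ x (h.add y z) (disj_add_right h hxy hyz hxz) =
      eqToHom (assocTgt_eq h φ hφ x y z) ≫
        h.addHom (dI3 h φ hφ x y z) (disj_add_right h hxy hyz hxz) (toId h (phiC φ hφ 0) x)
          (h.addHom (d10_11 h φ hφ y z) hyz (toId h (phiC φ hφ 1 * phiC φ hφ 0) y)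
            (toId h (phiC φ hφ 1 * phiC φ hφ 1) z)) := by
  unfold Fhom sharp Fobj
  rw [← h.addHom_comp, h.act_id, Category.id_comp, ← toId_naturality,
    toId_comp_addHom_toId h _ _ _ hyz _ (d10_11 h φ hφ y z),
    h.addHom_eqToHom_comp_right _ (dI3 h φ hφ x y z)]

lemma Fhom_sharp_id_comp_sharp {x y z : C} (hxy : DisjSupp x y) (hyz : DisjSupp y z)
    (hxz : DisjSupp x z) :
    Fhom h φ hφ (sharp h φ hφ x y hxy) (𝟙 z) ≫
        sharp h φ hφ (h.add x y) z (disj_add_left h hxy hyz hxz) =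
      eqToHom (assocSrc_eq h φ hφ x y z) ≫
        h.addHom (dI1 h φ hφ x y z) (disj_add_left h hxy hyz hxz)
          (h.addHom (d00_01 h φ hφ x y) hxy (toId h (phiC φ hφ 0 * phiC φ hφ 0) x)
            (toId h (phiC φ hφ 0 * phiC φ hφ 1) y))
          (toId h (phiC φ hφ 1) z) := by
  unfold Fhom sharp Fobj
  rw [← h.addHom_comp, h.act_id, Category.id_comp, ← toId_naturality,
    toId_comp_addHom_toId h _ _ _ hxy _ (d00_01 h φ hφ x y),
    h.addHom_eqToHom_comp_left _ (dI1 h φ hφ x y z)]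

lemma phiAssociator_comp_sharp {x y z : C} (hxy : DisjSupp x y) (hyz : DisjSupp y z)
    (hxz : DisjSupp x z) :
    phiAssociator h φ hφ x y z ≫ Fhom h φ hφ (𝟙 x) (sharp h φ hφ y z hyz) ≫
        sharp h φ hφ x (h.add y z) (disj_add_right h hxy hyz hxz) =
      Fhom h φ hφ (sharp h φ hφ x y hxy) (𝟙 z) ≫
        sharp h φ hφ (h.add x y) z (disj_add_left h hxy hyz hxz) ≫
        eqToHom (h.add_assoc' hxy hyz hxz) := by
  rw [Fhom_id_sharp_comp_sharp h φ hφ hxy hyz hxz, ← Category.assoc (Fhom h φ hφ _ _),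
    Fhom_sharp_id_comp_sharp h φ hφ hxy hyz hxz,
    h.addHom_assoc_symm (d0_10 h φ hφ x y) (d10_11 h φ hφ y z) (d0_11 h φ hφ x z) hxy hyz hxz
      (dI2 h φ hφ x y z) (disj_add_left h hxy hyz hxz)]
  unfold phiAssociator
  simp only [Category.assoc, eqToHom_trans_assoc, eqToHom_refl, Category.id_comp]
  slice_lhs 2 3 => rw [← h.addHom_comp, ← h.addHom_comp]
  rw [tw_comp_toId, tw_comp_toId, tw_comp_toId]

end sharp

/-- Properties of the comparison morphisms `φ♯`: unitality, compatibility with the symmetry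
and associativity isomorphisms, and naturality. -/
theorem stmt4 (C : Type*) [Category C] [MulAction (Minj ℕ) C] (h : ParSum C)
    (φ : Fin 2 × ℕ → ℕ) (hφ : Function.Injective φ)
    (x y z x' y' : C) (f : x ⟶ x') (g : y ⟶ y')
    (hxy : DisjSupp x y) (hyz : DisjSupp y z) (hxz : DisjSupp x z)
    (hxy' : DisjSupp x' y') :
    -- (i) φ♯_{x,0} = [1,φ¹]^x
    (sharp h φ hφ x h.zero (h.disj_zero_right x) =
      eqToHom (zero_right_eq h φ hφ x).symm ≫ toId h (phiC φ hφ 0) x ≫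
        eqToHom (h.add_zero' x).symm) ∧
    -- (ii) φ♯_{x,y} ∘ τ_{y,x} = φ♯_{y,x}
    (braiding h φ hφ y x ≫ sharp h φ hφ x y hxy =
      sharp h φ hφ y x hxy.symm ≫ eqToHom (h.add_comm' hxy.symm)) ∧
    -- (iii) compatibility with the associativity isomorphism
    (phiAssociator h φ hφ x y z ≫ Fhom h φ hφ (𝟙 x) (sharp h φ hφ y z hyz) ≫
        sharp h φ hφ x (h.add y z) (disj_add_right h hxy hyz hxz) =
      Fhom h φ hφ (sharp h φ hφ x y hxy) (𝟙 z) ≫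
        sharp h φ hφ (h.add x y) z (disj_add_left h hxy hyz hxz) ≫
        eqToHom (h.add_assoc' hxy hyz hxz)) ∧
    -- (iv) naturality
    (sharp h φ hφ x y hxy ≫ h.addHom hxy hxy' f g =
      Fhom h φ hφ f g ≫ sharp h φ hφ x' y' hxy') := by
  exact ⟨sharp_zero_right h φ hφ x, braiding_comp_sharp h φ hφ hxy,
    phiAssociator_comp_sharp h φ hφ hxy hyz hxz, sharp_naturality h φ hφ f g hxy hxy'⟩
end

section
/- Let G be a group, H a subgroup of G of finite index, W = N_G(H)/H its Weyl group, and K a finite group. Consider the groupoid whose objects are the finite (K × G)-sets all of whose G-stabilizers are conjugate in G to H, with morphisms the (K × G)-equivariant bijections, and the groupoid whose objects are the finite (K × W)-sets on which W acts freely, with morphisms the (K × W)-equivariant bijections. Then the H-fixed-point functor, sending such a (K × G)-set A to A^H with its induced (K × W)-action and sending an equivariant bijection to its restriction to H-fixed points, is an equivalence of groupoids. (This is the fixed-point content of the proposition that taking H-fixed points is a global equivalence from the parsummable category of finite G-sets with H-isotropy to the parsummable category of free W_G H-sets.) -/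
open CategoryTheory

/-- A finite set with an action of the monoid `M`. -/
structure FinActSet (M : Type) [Monoid M] where
  carrier : Type
  [finite : Finite carrier]
  [action : MulAction M carrier]

attribute [instance] FinActSet.finite FinActSet.action

/-- The groupoid of finite `M`-sets and `M`-equivariant bijections. -/
instance FinActSet.category (M : Type) [Monoid M] : Category (FinActSet M) where
  Hom A B := {e : A.carrier ≃ B.carrier // ∀ (m : M) (a : A.carrier), e (m • a) = m • e a}
  id A := ⟨Equiv.refl _, fun _ _ => rfl⟩
  comp {A B C} e f := ⟨e.1.trans f.1, fun m a => by
    simp only [Equiv.trans_apply, e.2, f.2]⟩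
  id_comp e := Subtype.ext (Equiv.ext fun _ => rfl)
  comp_id e := Subtype.ext (Equiv.ext fun _ => rfl)
  assoc e f g := Subtype.ext (Equiv.ext fun _ => rfl)

section

variable (G : Type) [Group G] (H : Subgroup G) (K : Type) [Group K] [Finite K]

/-- The Weyl group `W = N_G(H)/H`. -/
abbrev Weyl : Type := ↥(Subgroup.normalizer (H : Set G)) ⧸ H.subgroupOf (Subgroup.normalizer (H : Set G))

/-- The `G`-stabilizer of a point of a `(K × G)`-set. -/
def stabG (A : FinActSet (K × G)) (a : A.carrier) : Subgroup G :=
  Subgroup.comap (MonoidHom.inr K G) (MulAction.stabilizer (K × G) a)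

/-- The property singling out the finite `(K × G)`-sets all of whose `G`-stabilizers are
conjugate to `H`. -/
def SrcProp (A : FinActSet (K × G)) : Prop :=
  ∀ a : A.carrier, ∃ x : G, stabG G K A a = Subgroup.map (MulAut.conj x).toMonoidHom H

/-- The property singling out the finite `(K × W)`-sets on which `W` acts freely. -/
def TgtProp (B : FinActSet (K × Weyl G H)) : Prop :=
  ∀ (b : B.carrier) (w : Weyl G H), ((1 : K), w) • b = b → w = 1

/-- The set of `H`-fixed points of a `(K × G)`-set. -/
def FixCarrier (A : FinActSet (K × G)) : Type :=
  {a : A.carrier // ∀ h : G, h ∈ H → (((1 : K), h) : K × G) • a = a}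

instance (A : FinActSet (K × G)) : Finite (FixCarrier G H K A) :=
  Subtype.finite

/-- The induced `(K × W)`-action on the `H`-fixed points. -/
instance fixAction (A : FinActSet (K × G)) : MulAction (K × Weyl G H) (FixCarrier G H K A) where
  smul kw a := Quotient.liftOn' kw.2
    (fun n => (⟨((kw.1, (n : G)) : K × G) • a.1, by
      intro h hH
      have key : (((1 : K), h) : K × G) * (kw.1, (n : G)) =
          (kw.1, (n : G)) * ((1 : K), (n : G)⁻¹ * h * (n : G)) := by
        rw [Prod.mk_mul_mk, Prod.mk_mul_mk, one_mul, mul_one]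
        congr 1
        group
      have hmem : (n : G)⁻¹ * h * (n : G) ∈ H := by
        have h2 := Subgroup.mem_normalizer_iff.mp n.2
        refine (h2 _).mpr ?_
        have h3 : (n : G) * ((n : G)⁻¹ * h * (n : G)) * (n : G)⁻¹ = h := by group
        rw [h3]
        exact hH
      calc (((1 : K), h) : K × G) • ((kw.1, (n : G)) : K × G) • a.1
          = ((((1 : K), h) : K × G) * (kw.1, (n : G))) • a.1 := (mul_smul _ _ _).symm
        _ = (((kw.1, (n : G)) : K × G) * ((1 : K), (n : G)⁻¹ * h * (n : G))) • a.1 := by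
            rw [key]
        _ = ((kw.1, (n : G)) : K × G) • (((1 : K), (n : G)⁻¹ * h * (n : G)) : K × G) • a.1 :=
            mul_smul _ _ _
        _ = ((kw.1, (n : G)) : K × G) • a.1 := by rw [a.2 _ hmem]⟩ : FixCarrier G H K A))
    (by
      intro n₁ n₂ hr
      have h12 : n₁⁻¹ * n₂ ∈ H.subgroupOf (Subgroup.normalizer (H : Set G)) := QuotientGroup.leftRel_apply.mp hr
      have hmem : (n₁ : G)⁻¹ * (n₂ : G) ∈ H := Subgroup.mem_subgroupOf.mp h12
      apply Subtype.ext
      show ((kw.1, (n₁ : G)) : K × G) • a.1 = ((kw.1, (n₂ : G)) : K × G) • a.1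
      have key : ((kw.1, (n₂ : G)) : K × G) =
          (kw.1, (n₁ : G)) * ((1 : K), (n₁ : G)⁻¹ * (n₂ : G)) := by
        rw [Prod.mk_mul_mk, mul_one]
        congr 1
        group
      rw [key, mul_smul, a.2 _ hmem])
  one_smul a := Subtype.ext (one_smul (K × G) a.1)
  mul_smul kw kw' a := by
    obtain ⟨k₁, w₁⟩ := kw
    obtain ⟨k₂, w₂⟩ := kw'
    induction w₁ using Quotient.inductionOn' with
    | h n₁ =>
      induction w₂ using Quotient.inductionOn' with
      | h n₂ =>
        apply Subtype.ext
        show ((k₁ * k₂, ((n₁ : G) * (n₂ : G))) : K × G) • a.1 =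
          ((k₁, (n₁ : G)) : K × G) • ((k₂, (n₂ : G)) : K × G) • a.1
        rw [← mul_smul, Prod.mk_mul_mk]

/-- The `H`-fixed points of a finite `(K × G)`-set with `H`-isotropy, as a finite
`(K × W)`-set. -/
def FixObj (A : FinActSet (K × G)) : FinActSet (K × Weyl G H) where
  carrier := FixCarrier G H K A

/-- The `H`-fixed-point functor, from finite `(K × G)`-sets with all `G`-stabilizers
conjugate to `H`, to finite `(K × W)`-sets with free `W`-action. -/
def fixedPointsFunctor [H.FiniteIndex] :
    ObjectProperty.FullSubcategory (SrcProp G H K) ⥤ ObjectProperty.FullSubcategory (TgtProp G H K) where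
  obj A := ⟨FixObj G H K A.obj, by
    intro b w hw
    induction w using Quotient.inductionOn' with
    | h n =>
      have hb : (((1 : K), (n : G)) : K × G) • b.1 = b.1 := congrArg Subtype.val hw
      have hn : (n : G) ∈ stabG G K A.obj b.1 := hb
      obtain ⟨x, hx⟩ := A.property b.1
      have hle : H ≤ stabG G K A.obj b.1 := by
        intro h hH
        exact b.2 h hH
      rw [hx] at hle hn
      have hidx : (Subgroup.map (MulAut.conj x).toMonoidHom H).index = H.index := by
        apply Subgroup.index_map_eq
        · exact (MulAut.conj x).surjective
        · rw [(MonoidHom.ker_eq_bot_iff _).mpr (MulAut.conj x).injective]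
          exact bot_le
      have hrel : H.relIndex (Subgroup.map (MulAut.conj x).toMonoidHom H) = 1 := by
        have h1 := Subgroup.relIndex_mul_index hle
        rw [hidx] at h1
        have h2 : H.index ≠ 0 := Subgroup.FiniteIndex.index_ne_zero
        have h1' : H.relIndex (Subgroup.map (MulAut.conj x).toMonoidHom H) * H.index =
            1 * H.index := by rw [one_mul]; exact h1
        exact Nat.eq_of_mul_eq_mul_right (Nat.pos_of_ne_zero h2) h1'
      have heq : Subgroup.map (MulAut.conj x).toMonoidHom H = H :=
        le_antisymm (Subgroup.relIndex_eq_one.mp hrel) hle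
      rw [heq] at hn
      exact (QuotientGroup.eq_one_iff n).mpr (Subgroup.mem_subgroupOf.mpr hn)⟩
  map {A B} e :=
    ⟨⟨Equiv.subtypeEquiv e.hom.1 (fun a => by
      constructor
      · intro ha h hH
        rw [← e.hom.2, ha h hH]
      · intro hb h hH
        apply e.hom.1.injective
        rw [e.hom.2, hb h hH]),
     by
      rintro ⟨k, w⟩ a
      induction w using Quotient.inductionOn' with
      | h n => exact Subtype.ext (e.hom.2 ((k, (n : G)) : K × G) a.1)⟩⟩
  map_id A := InducedCategory.hom_ext (Subtype.ext (Equiv.ext fun _ => Subtype.ext rfl))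
  map_comp e f := InducedCategory.hom_ext (Subtype.ext (Equiv.ext fun _ => Subtype.ext rfl))

end

/-!
Every point `a` of a `(K × G)`-set with `H`-isotropy is `x • c` for an `H`-fixed point `c`: if
`Stab a = x H x⁻¹` then `c = x⁻¹ • a` has stabilizer `H`. Every fixed point has stabilizer
exactly `H`, a conjugate of `H` containing `H` with the same finite index. So if `x • c = x' • c'`
for fixed points `c, c'`, then `n = x'⁻¹ x` conjugates `Stab c = H` to `Stab c' = H`, i.e.
`n ∈ N_G(H)`. Hence a `(K × W)`-map `φ` of fixed points extends uniquely to an equivariant map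
`x • c ↦ x • φ c`: the functor is full and faithful. A free `(K × W)`-set `B` is the fixed-point
set of the balanced product `G ×_{N_G(H)} B`, whose point `[g, b]` has stabilizer `g H g⁻¹`
because `W` acts freely on `B`.
-/

namespace FinActSet

variable {M : Type} [Monoid M] {A B : FinActSet M}

theorem symm_smul (e : A ⟶ B) (m : M) (b : B.carrier) : e.1.symm (m • b) = m • e.1.symm b :=
  e.1.injective (by rw [e.2, Equiv.apply_symm_apply, Equiv.apply_symm_apply])

def isoMk (e : A.carrier ≃ B.carrier) (he : ∀ (m : M) (a : A.carrier), e (m • a) = m • e a) :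
    A ≅ B where
  hom := ⟨e, he⟩
  inv := ⟨e.symm, symm_smul ⟨e, he⟩⟩
  hom_inv_id := Subtype.ext (Equiv.ext e.symm_apply_apply)
  inv_hom_id := Subtype.ext (Equiv.ext e.apply_symm_apply)

end FinActSet

namespace Subgroup

variable {G : Type*} [Group G]

theorem map_conj_mul (x y : G) (S : Subgroup G) :
    S.map (MulAut.conj (x * y)).toMonoidHom =
      (S.map (MulAut.conj y).toMonoidHom).map (MulAut.conj x).toMonoidHom := by
  rw [map_map, map_mul]
  rfl

theorem map_conj_one (S : Subgroup G) : S.map (MulAut.conj (1 : G)).toMonoidHom = S := by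
  rw [map_one]
  exact map_id S

theorem map_conj_eq_of_le_map_conj {H : Subgroup G} [H.FiniteIndex] {x : G}
    (h : H ≤ H.map (MulAut.conj x).toMonoidHom) : H.map (MulAut.conj x).toMonoidHom = H :=
  (h.lt_or_eq.resolve_left fun hlt =>
    (index_strictAnti hlt).ne (index_map_equiv H (MulAut.conj x))).symm

end Subgroup

section Stabilizers

variable {G K : Type} [Group G] [Group K]

theorem mem_stabG {A : FinActSet (K × G)} {a : A.carrier} {y : G} :
    y ∈ stabG G K A a ↔ ((1 : K), y) • a = a :=
  Iff.rfl

theorem stabG_smul (A : FinActSet (K × G)) (m : K × G) (a : A.carrier) :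
    stabG G K A (m • a) = (stabG G K A a).map (MulAut.conj m.2).toMonoidHom := by
  ext y
  have hconj : m⁻¹ * (((1 : K), y) * m) = ((1 : K), m.2⁻¹ * y * m.2) := by
    ext <;> simp [mul_assoc]
  rw [Subgroup.mem_map_equiv, MulAut.conj_symm_apply, mem_stabG, mem_stabG, ← hconj,
    mul_smul, inv_smul_eq_iff, mul_smul]

end Stabilizers

section FixedPoints

variable {G K : Type} [Group G] [Group K] {H : Subgroup G} {A : FinActSet (K × G)}

theorem FixCarrier.val_smul_mk (k : K) (n : Subgroup.normalizer (H : Set G))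
    (c : FixCarrier G H K A) : (((k, (n : Weyl G H)) : K × Weyl G H) • c).1 = (k, (n : G)) • c.1 :=
  rfl

theorem exists_smul_fixedPoint (hA : SrcProp G H K A) (a : A.carrier) :
    ∃ (x : G) (c : FixCarrier G H K A), ((1 : K), x) • c.1 = a := by
  obtain ⟨x, hx⟩ := hA a
  refine ⟨x, ⟨((1 : K), x)⁻¹ • a, fun h hh => ?_⟩, smul_inv_smul _ a⟩
  rw [← mem_stabG, stabG_smul, hx, ← Subgroup.map_conj_mul]
  simpa [Subgroup.map_conj_one] using hh

theorem stabG_fixedPoint [H.FiniteIndex] (hA : SrcProp G H K A) (c : FixCarrier G H K A) :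
    stabG G K A c.1 = H := by
  obtain ⟨x, hx⟩ := hA c.1
  have hle : H ≤ stabG G K A c.1 := fun h hh => c.2 h hh
  rw [hx] at hle ⊢
  exact Subgroup.map_conj_eq_of_le_map_conj hle

theorem mem_normalizer_of_smul_fixedPoint [H.FiniteIndex] (hA : SrcProp G H K A)
    {c c' : FixCarrier G H K A} {n : G} (h : ((1 : K), n) • c.1 = c'.1) :
    n ∈ Subgroup.normalizer (H : Set G) := by
  have hstab := stabG_smul A ((1 : K), n) c.1
  rw [h, stabG_fixedPoint hA, stabG_fixedPoint hA] at hstab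
  exact Subgroup.mem_normalizer_iff_map_conj_eq.mpr hstab.symm

theorem smul_smul_fixedPoint (m : K × G) (x : G) (c : FixCarrier G H K A) :
    m • ((1 : K), x) • c.1 = ((1 : K), m.2 * x) • (((m.1, 1) : K × Weyl G H) • c).1 := by
  change _ = ((1 : K), m.2 * x) • ((m.1, (1 : G)) : K × G) • c.1
  rw [← mul_smul, ← mul_smul]
  congr 1
  ext <;> simp

end FixedPoints

section Extension

variable {G K : Type} [Group G] [Group K] {H : Subgroup G} {A B : FinActSet (K × G)}

theorem FinActSet.hom_ext_of_fixedPoints (hA : SrcProp G H K A) {e f : A ⟶ B}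
    (h : ∀ c : FixCarrier G H K A, e.1 c.1 = f.1 c.1) : e = f :=
  Subtype.ext <| Equiv.ext fun a => by
    obtain ⟨x, c, rfl⟩ := exists_smul_fixedPoint hA a
    rw [e.2, f.2, h]

noncomputable def extendFixed (hA : SrcProp G H K A)
    (φ : FixCarrier G H K A → FixCarrier G H K B) (a : A.carrier) : B.carrier :=
  ((1 : K), (exists_smul_fixedPoint hA a).choose) •
    (φ (exists_smul_fixedPoint hA a).choose_spec.choose).1

variable [H.FiniteIndex] (hA : SrcProp G H K A) {φ : FixCarrier G H K A → FixCarrier G H K B}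
  (hφ : ∀ (m : K × Weyl G H) c, φ (m • c) = m • φ c)
include hA hφ

theorem smul_map_fixedPoint_eq {x x' : G} {c c' : FixCarrier G H K A}
    (h : ((1 : K), x) • c.1 = ((1 : K), x') • c'.1) :
    ((1 : K), x) • (φ c).1 = ((1 : K), x') • (φ c').1 := by
  have hmove : ((1 : K), x'⁻¹ * x) • c.1 = c'.1 := by
    have hx : ((1 : K), x'⁻¹ * x) = ((1 : K), x')⁻¹ * ((1 : K), x) := by simp
    rw [hx, mul_smul, h, inv_smul_smul]
  have hn := mem_normalizer_of_smul_fixedPoint hA hmove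
  have hc' : c' = (((1 : K), ((⟨_, hn⟩ : Subgroup.normalizer (H : Set G)) : Weyl G H)) :
      K × Weyl G H) • c :=
    Subtype.ext hmove.symm
  rw [hc', hφ, FixCarrier.val_smul_mk, ← mul_smul]
  simp

theorem extendFixed_smul_fixedPoint (x : G) (c : FixCarrier G H K A) :
    extendFixed hA φ (((1 : K), x) • c.1) = ((1 : K), x) • (φ c).1 :=
  smul_map_fixedPoint_eq hA hφ
    (exists_smul_fixedPoint hA (((1 : K), x) • c.1)).choose_spec.choose_spec

theorem extendFixed_fixedPoint (c : FixCarrier G H K A) : extendFixed hA φ c.1 = (φ c).1 := by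
  simpa [Prod.mk_one_one] using extendFixed_smul_fixedPoint hA hφ 1 c

theorem extendFixed_smul (m : K × G) (a : A.carrier) :
    extendFixed hA φ (m • a) = m • extendFixed hA φ a := by
  obtain ⟨x, c, rfl⟩ := exists_smul_fixedPoint hA a
  rw [smul_smul_fixedPoint, extendFixed_smul_fixedPoint hA hφ, hφ,
    extendFixed_smul_fixedPoint hA hφ, smul_smul_fixedPoint]

theorem extendFixed_extendFixed (hB : SrcProp G H K B)
    {ψ : FixCarrier G H K B → FixCarrier G H K A}
    (hψ : ∀ (m : K × Weyl G H) c, ψ (m • c) = m • ψ c)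
    (hψφ : Function.LeftInverse ψ φ) (a : A.carrier) :
    extendFixed hB ψ (extendFixed hA φ a) = a := by
  obtain ⟨x, c, rfl⟩ := exists_smul_fixedPoint hA a
  rw [extendFixed_smul_fixedPoint hA hφ, extendFixed_smul_fixedPoint hB hψ, hψφ]

end Extension

section BalancedProduct

variable {G : Type} [Group G] {H : Subgroup G} {K : Type} [Group K] (B : FinActSet (K × Weyl G H))

def balancedRel : Setoid (G × B.carrier) where
  r p q := ∃ n : Subgroup.normalizer (H : Set G),
    p.1 = q.1 * (n : G)⁻¹ ∧ p.2 = ((1 : K), (n : Weyl G H)) • q.2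
  iseqv := by
    refine ⟨fun p => ⟨1, by simp, by simp [Prod.mk_one_one]⟩, ?_, ?_⟩
    · rintro p q ⟨n, h₁, h₂⟩
      refine ⟨n⁻¹, by simp [h₁], ?_⟩
      rw [h₂, ← mul_smul]
      simp [Prod.mk_one_one]
    · rintro p q r ⟨n, h₁, h₂⟩ ⟨n', h₃, h₄⟩
      refine ⟨n * n', by simp [h₁, h₃, mul_assoc], ?_⟩
      rw [h₂, h₄, ← mul_smul]
      simp

/-- The balanced product `G ×_{N_G(H)} B`. -/
abbrev BalancedProduct : Type := Quotient (balancedRel B)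

end BalancedProduct

namespace BalancedProduct

variable {G : Type} [Group G] {H : Subgroup G} {K : Type} [Group K] {B : FinActSet (K × Weyl G H)}

instance : MulAction (K × G) (BalancedProduct B) where
  smul m := Quotient.map (fun p => (m.2 * p.1, ((m.1, 1) : K × Weyl G H) • p.2)) <| by
    rintro p q ⟨n, h₁, h₂⟩
    refine ⟨n, by simp [h₁, mul_assoc], ?_⟩
    rw [h₂, ← mul_smul, ← mul_smul]
    simp
  one_smul := Quotient.ind fun p => by
    change Quotient.mk _ _ = _
    simp [Prod.mk_one_one]
  mul_smul m m' := Quotient.ind fun p => by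
    change Quotient.mk _ (_, _) = Quotient.mk _ (_, _ • _ • _)
    rw [← mul_smul]
    simp [mul_assoc]

theorem smul_mk (m : K × G) (g : G) (b : B.carrier) :
    m • (⟦(g, b)⟧ : BalancedProduct B) = ⟦(m.2 * g, ((m.1, 1) : K × Weyl G H) • b)⟧ :=
  rfl

theorem mk_mul_normalizer (g : G) (n : Subgroup.normalizer (H : Set G)) (b : B.carrier) :
    (⟦(g * n, b)⟧ : BalancedProduct B) = ⟦(g, ((1 : K), (n : Weyl G H)) • b)⟧ :=
  Quotient.sound ⟨n⁻¹, by simp, by rw [← mul_smul]; simp [Prod.mk_one_one]⟩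

theorem mk_mul_of_mem (g : G) {h : G} (hh : h ∈ H) (b : B.carrier) :
    (⟦(g * h, b)⟧ : BalancedProduct B) = ⟦(g, b)⟧ := by
  have hw : ((⟨h, H.le_normalizer hh⟩ : Subgroup.normalizer (H : Set G)) : Weyl G H) = 1 :=
    (QuotientGroup.eq_one_iff _).mpr (Subgroup.mem_subgroupOf.mpr hh)
  rw [show g * h = g * (⟨h, H.le_normalizer hh⟩ : Subgroup.normalizer (H : Set G)) from rfl,
    mk_mul_normalizer, hw, Prod.mk_one_one, one_smul]

variable [H.FiniteIndex]

instance : Finite (BalancedProduct B) := by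
  refine Finite.of_surjective (fun q : (G ⧸ H) × B.carrier => ⟦(q.1.out, q.2)⟧) ?_
  refine Quotient.ind fun ⟨g, b⟩ => ⟨((g : G ⧸ H), b), ?_⟩
  obtain ⟨h, hh⟩ := QuotientGroup.mk_out_eq_mul H g
  simp only [hh, mk_mul_of_mem g h.2]

variable (B) in
abbrev finActSet (B : FinActSet (K × Weyl G H)) : FinActSet (K × G) :=
  ⟨BalancedProduct B⟩

theorem stabG_mk (hB : TgtProp G H K B) (g : G) (b : B.carrier) :
    stabG G K (finActSet B) ⟦(g, b)⟧ = H.map (MulAut.conj g).toMonoidHom := by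
  ext y
  rw [mem_stabG, smul_mk, Prod.mk_one_one, one_smul, Subgroup.mem_map_equiv,
    MulAut.conj_symm_apply]
  constructor
  · intro h
    obtain ⟨n, h₁, h₂⟩ := Quotient.exact h
    have hn : (n : G) ∈ H :=
      Subgroup.mem_subgroupOf.mp ((QuotientGroup.eq_one_iff n).mp (hB b _ h₂.symm))
    change y * g = g * (n : G)⁻¹ at h₁
    have hy : g⁻¹ * y * g = (n : G)⁻¹ := by
      rw [mul_assoc, h₁]
      group
    exact hy ▸ inv_mem hn
  · intro h
    rw [show y * g = g * (g⁻¹ * y * g) by group, mk_mul_of_mem g h]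

theorem srcProp (hB : TgtProp G H K B) : SrcProp G H K (finActSet B) :=
  Quotient.ind fun ⟨g, b⟩ => ⟨g, stabG_mk hB g b⟩

def toFixedPoints (b : B.carrier) : FixCarrier G H K (finActSet B) :=
  ⟨⟦(1, b)⟧, fun h hh => by rw [smul_mk, Prod.mk_one_one, one_smul, mul_one, ← one_mul h,
    mk_mul_of_mem 1 hh]⟩

theorem toFixedPoints_smul (m : K × Weyl G H) (b : B.carrier) :
    toFixedPoints (m • b) = m • toFixedPoints b := by
  obtain ⟨k, w⟩ := m
  induction w using QuotientGroup.induction_on with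
  | H n =>
    refine Subtype.ext ?_
    change ⟦(1, _)⟧ = ⟦((n : G) * 1, _)⟧
    rw [mul_one, ← one_mul (n : G), mk_mul_normalizer, ← mul_smul]
    simp

theorem toFixedPoints_injective : Function.Injective (toFixedPoints (B := B)) := by
  intro b b' h
  obtain ⟨n, h₁, h₂⟩ := Quotient.exact (congrArg Subtype.val h)
  have hn : (n : G) = 1 := by simpa using h₁
  have hw : (n : Weyl G H) = 1 :=
    (QuotientGroup.eq_one_iff n).mpr (Subgroup.mem_subgroupOf.mpr (hn ▸ H.one_mem))
  simpa [hw, Prod.mk_one_one] using h₂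

theorem toFixedPoints_surjective (hB : TgtProp G H K B) :
    Function.Surjective (toFixedPoints (B := B)) := by
  rintro ⟨c, hc⟩
  obtain ⟨⟨g, b⟩, rfl⟩ := Quotient.exists_rep c
  have hle : H ≤ stabG G K (finActSet B) ⟦(g, b)⟧ := hc
  rw [stabG_mk hB] at hle
  have hg := Subgroup.mem_normalizer_iff_map_conj_eq.mpr (Subgroup.map_conj_eq_of_le_map_conj hle)
  refine ⟨((1 : K), ((⟨g, hg⟩ : Subgroup.normalizer (H : Set G)) : Weyl G H)) • b, Subtype.ext ?_⟩
  change ⟦(1, _)⟧ = ⟦(g, b)⟧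
  rw [← mk_mul_normalizer, one_mul]

noncomputable def fixedPointsIso (hB : TgtProp G H K B) : B ≅ FixObj G H K (finActSet B) :=
  FinActSet.isoMk (Equiv.ofBijective _ ⟨toFixedPoints_injective, toFixedPoints_surjective hB⟩)
    toFixedPoints_smul

end BalancedProduct

section Equivalence

variable {G : Type} [Group G] {H : Subgroup G} [H.FiniteIndex] {K : Type} [Group K] [Finite K]

noncomputable def extendFixedHom {A B : FinActSet (K × G)} (hA : SrcProp G H K A)
    (hB : SrcProp G H K B) (e : FixObj G H K A ⟶ FixObj G H K B) : A ⟶ B :=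
  ⟨⟨extendFixed hA e.1, extendFixed hB e.1.symm,
    extendFixed_extendFixed hA e.2 hB (FinActSet.symm_smul e) e.1.left_inv,
    extendFixed_extendFixed hB (FinActSet.symm_smul e) hA e.2 e.1.right_inv⟩,
    extendFixed_smul hA e.2⟩

instance : (fixedPointsFunctor G H K).Faithful where
  map_injective {A _} _ _ h := InducedCategory.hom_ext <|
    FinActSet.hom_ext_of_fixedPoints A.property fun c => congrArg (fun f => (f.hom.1 c).1) h

instance : (fixedPointsFunctor G H K).Full where
  map_surjective {A B} e :=
    ⟨ObjectProperty.homMk (extendFixedHom A.property B.property e.hom),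
      InducedCategory.hom_ext <| Subtype.ext <| Equiv.ext fun c =>
        Subtype.ext (extendFixed_fixedPoint A.property e.hom.2 c)⟩

instance : (fixedPointsFunctor G H K).EssSurj where
  mem_essImage B := ⟨⟨BalancedProduct.finActSet B.obj, BalancedProduct.srcProp B.property⟩,
    ⟨ObjectProperty.isoMk _ (BalancedProduct.fixedPointsIso B.property).symm⟩⟩

end Equivalence

/-- Let `H` be a finite-index subgroup of `G`, `W = N_G(H)/H` its Weyl group, and `K` a
finite group.  The `H`-fixed-point functor, from the groupoid of finite `(K × G)`-sets all of
whose `G`-stabilizers are conjugate to `H` to the groupoid of finite `(K × W)`-sets with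
free `W`-action, is an equivalence of categories. -/
theorem stmt8 (G : Type) [Group G] (H : Subgroup G) [H.FiniteIndex]
    (K : Type) [Group K] [Finite K] :
    (fixedPointsFunctor G H K).IsEquivalence :=
  { }
end

section
/- Let R be a ring, G a finite group, and P a left module over the group ring R[G] such that P, regarded as an R-module by restriction of scalars along R → R[G], is finitely generated and projective. Then there exist a natural number n, an R[G]-linear map ι : P → R[G]^n into a finitely generated free R[G]-module, and an R-linear map ρ : R[G]^n → P such that ρ ∘ ι = id_P. In particular ι is injective, so P is isomorphic as an R[G]-module to an R[G]-submodule of a finitely generated free R[G]-module whose inclusion is R-linearly split. -/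
/-!
Over `R`, the module `P` is a direct summand of `R^n`: there are `R`-linear maps
`s : P → R^n` and `π : R^n → P` with `π ∘ s = id`. Averaging a coordinate functional `f` of `s`
over the finite group gives the `R[G]`-linear map `p ↦ ∑ g, g · f (g⁻¹ • p)` into `R[G]`, whose
coefficient at `1` is `f` again. Hence the coefficients at `1`, followed by `π`, form an
`R`-linear retraction of the resulting `R[G]`-linear map `P → R[G]^n`.
-/

namespace MonoidAlgebra

section Semiring

variable {R G : Type*} [Semiring R]

variable (R) in
noncomputable def lcoeff (g : G) : R[G] →ₗ[R] R :=
  Finsupp.lapply g ∘ₗ (coeffLinearEquiv R).toLinearMap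

variable [Monoid G] {V W : Type*}
  [AddCommMonoid V] [Module R V] [Module R[G] V] [IsScalarTower R R[G] V]
  [AddCommMonoid W] [Module R W] [Module R[G] W] [IsScalarTower R R[G] W]

theorem of_smul_smul_comm (g : G) (r : R) (v : V) : of R G g • r • v = r • of R G g • v := by
  rw [← smul_one_smul R[G] r v, ← smul_one_smul R[G] r (of R G g • v), smul_smul, smul_smul,
    one_def, smul_single', mul_one, of_apply, single_mul_single, single_mul_single, mul_one,
    one_mul, mul_one, one_mul]

theorem single_smul_eq_smul_of_smul (g : G) (r : R) (v : V) :
    single g r • v = r • of R G g • v := by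
  rw [← smul_assoc, of_apply, smul_single', mul_one]

/-- Unlike `MonoidAlgebra.equivariantOfLinearOfComm`, this does not need `R` to be commutative. -/
noncomputable def equivariantOfLinearOfComm' (f : V →ₗ[R] W)
    (h : ∀ (g : G) (v : V), f (of R G g • v) = of R G g • f v) : V →ₗ[R[G]] W where
  toFun := f
  map_add' := f.map_add
  map_smul' c v := by
    induction c using induction_linear with
    | zero => simp
    | add x y hx hy => simp only [add_smul, f.map_add, hx, hy, RingHom.id_apply]
    | single g r => simp only [single_smul_eq_smul_of_smul, f.map_smul, h, RingHom.id_apply]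

end Semiring

section Averaging

variable {R G P : Type*} [Semiring R] [Group G] [Fintype G]
  [AddCommMonoid P] [Module R P] [Module R[G] P] [IsScalarTower R R[G] P]

variable (G) in
noncomputable def equivariantOfFunctional (f : P →ₗ[R] R) : P →ₗ[R[G]] R[G] :=
  equivariantOfLinearOfComm'
    { toFun p := ∑ g : G, single g (f (of R G g⁻¹ • p))
      map_add' p q := by simp only [smul_add, map_add, single_add, Finset.sum_add_distrib]
      map_smul' r p := by
        simp only [of_smul_smul_comm, map_smul, smul_eq_mul, ← smul_single', Finset.smul_sum,
          RingHom.id_apply] }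
    fun h p => by
      simp only [LinearMap.coe_mk, AddHom.coe_mk, smul_eq_mul, Finset.mul_sum]
      refine Fintype.sum_equiv (Equiv.mulLeft h⁻¹) _ _ fun g => ?_
      simp only [Equiv.coe_mulLeft, smul_smul, of_apply, single_mul_single, mul_one, mul_inv_rev,
        inv_inv, mul_inv_cancel_left, one_mul]

theorem equivariantOfFunctional_apply (f : P →ₗ[R] R) (p : P) :
    equivariantOfFunctional G f p = ∑ g : G, single g (f (of R G g⁻¹ • p)) :=
  rfl

theorem coeff_equivariantOfFunctional_one (f : P →ₗ[R] R) (p : P) :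
    (equivariantOfFunctional G f p).coeff 1 = f p := by
  classical
  simp [equivariantOfFunctional_apply, coeff_sum, Finsupp.single_apply, ← one_def]

end Averaging

end MonoidAlgebra

open MonoidAlgebra

/-- Let `R` be a ring, `G` a finite group, and `P` a left `R[G]`-module that is finitely
generated and projective as an `R`-module (for the restriction of scalars along
`R → R[G]`, which is encoded by the `IsScalarTower` hypothesis).  Then there are an `n`, an
`R[G]`-linear map `i : P → R[G]^n` and an `R`-linear map `ρ : R[G]^n → P` with `ρ ∘ i = id`;
in particular `i` is injective, so `P` is an `R[G]`-submodule of a finitely generated free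
`R[G]`-module whose inclusion is `R`-linearly split. -/
theorem stmt9 (R : Type) [Ring R] (G : Type) [Group G] [Finite G]
    (P : Type) [AddCommGroup P] [Module (MonoidAlgebra R G) P]
    [Module R P] [IsScalarTower R (MonoidAlgebra R G) P]
    (hfg : Module.Finite R P) (hproj : Module.Projective R P) :
    ∃ (n : ℕ) (i : P →ₗ[MonoidAlgebra R G] (Fin n → MonoidAlgebra R G))
      (ρ : (Fin n → MonoidAlgebra R G) →ₗ[R] P),
      (∀ p : P, ρ (i p) = p) ∧ Function.Injective i := by
  have := Fintype.ofFinite G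
  obtain ⟨n, π, hπ⟩ := Module.Finite.exists_fin' R P
  obtain ⟨s, hs⟩ := Module.projective_lifting_property π LinearMap.id hπ
  let i := LinearMap.pi fun j => equivariantOfFunctional G (LinearMap.proj j ∘ₗ s)
  let ρ := π ∘ₗ LinearMap.pi fun j => lcoeff R (1 : G) ∘ₗ LinearMap.proj j
  have hρi (p : P) : ρ (i p) = p := by
    have hcoeff : (LinearMap.pi fun j => lcoeff R (1 : G) ∘ₗ LinearMap.proj j) (i p) = s p :=
      funext fun j => coeff_equivariantOfFunctional_one _ p
    exact (congrArg π hcoeff).trans (LinearMap.congr_fun hs p)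
  exact ⟨n, i, ρ, hρi, Function.LeftInverse.injective hρi⟩
end

section
/- Let X be a set with a left action of the monoid M(ℕ) of injective self-maps of ℕ, and let x be an element of X. If x is supported on a finite subset A of ℕ and also supported on a finite subset B of ℕ, then x is supported on A ∩ B. Consequently, every finitely supported element x of X is supported on its support supp(x). -/
open CategoryTheory

/-!
On a finite support `B`, `u • x` depends only on `u` restricted to `B`: there `u` agrees with a
permutation `σ`, and `σ⁻¹ ∘ u` fixes `B`. Now let `u` fix `A ∩ B`. Let `p` fix `A` and push the rest
of `ℕ` beyond `A ∪ u⁻¹(A)`. Then `u ∘ p` agrees on `B` with an injection `q` fixing `A`, so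
`u • x = u • p • x = q • x = x`. Since supports are closed under intersection, a `⊆`-minimal finite
support lies inside every finite support, so it equals `supp x`.
-/

def Minj.ofPerm {U : Type*} (σ : Equiv.Perm U) : Minj U :=
  ⟨⇑σ, σ.injective⟩

section Supported

variable {U X : Type*} [MulAction (Minj U) X] {x : X}

lemma Supported.smul_eq_ofPerm_of_eqOn {B : Set U} (hx : Supported B x) {u : Minj U}
    {σ : Equiv.Perm U} (h : Set.EqOn u σ B) : u • x = Minj.ofPerm σ • x := by
  let w : Minj U := ⟨σ.symm ∘ u, σ.symm.injective.comp u.2⟩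
  have hw : Minj.ofPerm σ * w = u := DFunLike.ext _ _ fun n => σ.apply_symm_apply (u n)
  have hwB : ∀ a ∈ B, w a = a := fun a ha => σ.symm_apply_eq.mpr (h ha)
  rw [← hw, mul_smul, hx w hwB]

lemma Supported.smul_eq_of_eqOn [Infinite U] {B : Set U} (hB : B.Finite) (hx : Supported B x)
    {u v : Minj U} (h : Set.EqOn u v B) : u • x = v • x := by
  have hcard : Cardinal.mk B < Cardinal.mk U := hB.lt_aleph0.trans_le (Cardinal.aleph0_le_mk U)
  let f : B ↪ U := ⟨fun a => u a, fun a b hab => Subtype.ext (u.2 hab)⟩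
  obtain ⟨σ, hσ⟩ := Cardinal.extend_function_of_lt f hcard ⟨Equiv.refl U⟩
  have huσ : Set.EqOn u σ B := fun a ha => (hσ ⟨a, ha⟩).symm
  rw [hx.smul_eq_ofPerm_of_eqOn huσ, hx.smul_eq_ofPerm_of_eqOn (h.symm.trans huσ)]

end Supported

open scoped Classical in
noncomputable def Minj.fixShift (A : Set ℕ) (N : ℕ) (u : Minj ℕ) (hu : ∀ m, N ≤ m → u m ∉ A) :
    Minj ℕ :=
  ⟨fun n => if n ∈ A then n else u (n + N), by
    intro a b hab
    simp only at hab
    split_ifs at hab with ha hb hb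
    · exact hab
    · exact absurd (hab ▸ ha) (hu _ (Nat.le_add_left N b))
    · exact absurd (hab ▸ hb) (hu _ (Nat.le_add_left N a))
    · exact Nat.add_right_cancel (u.2 hab)⟩

lemma Minj.fixShift_of_mem {A : Set ℕ} {N : ℕ} {u : Minj ℕ} {hu : ∀ m, N ≤ m → u m ∉ A} {n : ℕ}
    (hn : n ∈ A) : fixShift A N u hu n = n :=
  if_pos hn

lemma Minj.fixShift_of_notMem {A : Set ℕ} {N : ℕ} {u : Minj ℕ} {hu : ∀ m, N ≤ m → u m ∉ A}
    {n : ℕ} (hn : n ∉ A) : fixShift A N u hu n = u (n + N) :=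
  if_neg hn

section Nat

variable {X : Type*} [MulAction (Minj ℕ) X] {x : X}

theorem Supported.inter {A B : Set ℕ} (hA : A.Finite) (hB : B.Finite) (hxA : Supported A x)
    (hxB : Supported B x) : Supported (A ∩ B) x := by
  intro u hu
  obtain ⟨M, hM⟩ := (hA.union (hA.preimage u.2.injOn)).bddAbove
  have hN : ∀ m, M + 1 ≤ m → m ∉ A ∧ u m ∉ A := fun m hm =>
    ⟨fun h => by have := hM (Or.inl h); omega, fun h => by have := hM (Or.inr h); omega⟩
  let p := Minj.fixShift A (M + 1) 1 fun m hm => (hN m hm).1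
  let q := Minj.fixShift A (M + 1) u fun m hm => (hN m hm).2
  have hupq : Set.EqOn (u * p) q B := by
    intro n hn
    by_cases hnA : n ∈ A
    · rw [Minj.mul_apply, Minj.fixShift_of_mem hnA, Minj.fixShift_of_mem hnA, hu n ⟨hnA, hn⟩]
    · rw [Minj.mul_apply, Minj.fixShift_of_notMem hnA, Minj.fixShift_of_notMem hnA]
      rfl
  calc u • x = u • p • x := by rw [hxA p fun a => Minj.fixShift_of_mem]
    _ = q • x := by rw [← mul_smul, hxB.smul_eq_of_eqOn hB hupq]
    _ = x := hxA q fun a => Minj.fixShift_of_mem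

theorem FinSupported.supported_supp (hx : FinSupported (U := ℕ) x) :
    Supported (supp (U := ℕ) x) x := by
  obtain ⟨A, hA⟩ := exists_minimal_of_wellFoundedLT (fun A : Finset ℕ => Supported (A : Set ℕ) x) hx
  have hAsub : ∀ B : Finset ℕ, Supported (B : Set ℕ) x → A ⊆ B := fun B hB =>
    Finset.inter_eq_left.mp <| hA.eq_of_le (by
      rw [Finset.coe_inter]
      exact hA.prop.inter A.finite_toSet B.finite_toSet hB) Finset.inter_subset_left
  have hsupp : supp (U := ℕ) x = A :=
    Set.Subset.antisymm (fun i hi => hi A hA.prop) fun i hi B hB => hAsub B hB hi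
  rw [hsupp]
  exact hA.prop

end Nat

/-- If `x` is supported on the finite sets `A` and `B`, then it is supported on `A ∩ B`;
consequently every finitely supported element is supported on its support. -/
theorem stmt11 (X : Type*) [MulAction (Minj ℕ) X] :
    (∀ (x : X) (A B : Finset ℕ), Supported (A : Set ℕ) x → Supported (B : Set ℕ) x →
      Supported ((A ∩ B : Finset ℕ) : Set ℕ) x) ∧
    (∀ x : X, FinSupported (U := ℕ) x → Supported (supp (U := ℕ) x) x) := by
  refine ⟨fun x A B hA hB => ?_, fun x hx => hx.supported_supp⟩
  rw [Finset.coe_inter]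
  exact hA.inter A.finite_toSet B.finite_toSet hB
end

section
/- Let C be an M(ℕ)-category and x a finitely supported object of C. If v in M(ℕ) fixes supp(x) elementwise, then v • x = x and the isomorphism ι(v,x) : x → v • x = x is the identity morphism of x. -/
open CategoryTheory

/-!
A finite support `A` of `x` of minimal size lies inside `supp x`: if `a ∈ A` is missing from
another finite support `B`, conjugating by transpositions of `a` with a fresh point (there are
infinitely many) shows that `A.erase a` supports `x` as well. So `v` fixes the finite support `A`
pointwise, whence `v • x = x`.

On the injections fixing `A`, `u ↦ ι(u,x)` is a multiplicative map into `Aut x`, and every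
multiplicative map from this monoid to a group is trivial: by Hilbert's hotel there are `s, t, w`
fixing `A` with `w s = s` and `w t = t v`, so `w` and then `v` are sent to `1`.
-/

open Function

lemma Set.injective_piecewise_id {α : Type*} {A : Set α} [DecidablePred (· ∈ A)]
    {f : α → α} (hf : Injective f) (hfA : ∀ n, f n ∉ A) : Injective (A.piecewise id f) :=
  (Set.injective_piecewise_iff A).mpr
    ⟨Set.injOn_id _, hf.injOn, fun _ ha b _ h => hfA b (h ▸ ha)⟩

lemma Function.injective_extend_id {α β : Type*} {f g : α → β} (hf : Injective f)
    (hg : Injective g) (hgf : ∀ n, ∃ m, f m = g n) : Injective (extend f g id) := by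
  intro m n hmn
  by_cases hm : ∃ a, f a = m <;> by_cases hn : ∃ b, f b = n
  · obtain ⟨a, rfl⟩ := hm
    obtain ⟨b, rfl⟩ := hn
    rw [hf.extend_apply, hf.extend_apply] at hmn
    rw [hg hmn]
  · obtain ⟨a, rfl⟩ := hm
    rw [hf.extend_apply, extend_apply' _ _ _ hn] at hmn
    exact absurd (by simpa [hmn] using hgf a) hn
  · obtain ⟨b, rfl⟩ := hn
    rw [hf.extend_apply, extend_apply' _ _ _ hm] at hmn
    exact absurd (by simpa [← hmn] using hgf b) hm
  · rwa [extend_apply' _ _ _ hm, extend_apply' _ _ _ hn] at hmn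

lemma Function.Injective.mapsTo_compl_of_fixed {α : Type*} {A : Set α} {v : α → α}
    (hv : Injective v) (hvA : ∀ a ∈ A, v a = a) : Set.MapsTo v Aᶜ Aᶜ :=
  fun _ hn hvn => hn (hv (hvA _ hvn) ▸ hvn)

lemma MulHom.map_eq_one_of_mul_eq {M G : Type*} [Mul M] [Group G] (ψ : M →ₙ* G) {v s t w : M}
    (hs : w * s = s) (ht : w * t = t * v) : ψ v = 1 := by
  have hw : ψ w = 1 := mul_eq_right.mp (by rw [← map_mul, hs])
  exact mul_eq_left.mp (by rw [← map_mul, ← ht, map_mul, hw, one_mul])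

section Injections

variable {U : Type*} {X : Type*} [MulAction (Minj U) X]

def Minj.swap [DecidableEq U] (a b : U) : Minj U :=
  ⟨⇑(Equiv.swap a b), (Equiv.swap a b).injective⟩

lemma Minj.swap_smul_swap_smul [DecidableEq U] (a b : U) (y : X) :
    Minj.swap a b • Minj.swap a b • y = y := by
  have : Minj.swap a b * Minj.swap a b = 1 :=
    Subtype.ext <| funext fun n => show Equiv.swap a b (Equiv.swap a b n) = n from
      Equiv.swap_apply_self a b n
  rw [← mul_smul, this, one_smul]

lemma Supported.fixingSubmonoid_le {A : Set U} {x : X} (hA : Supported A x) :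
    fixingSubmonoid (Minj U) A ≤ MulAction.stabilizerSubmonoid (Minj U) x :=
  fun u hu => hA u ((mem_fixingSubmonoid_iff _).mp hu)

section Infinite

variable [Infinite U]

/-- For a fresh point `c`, the transpositions `ρ = (a c)` and `σ = (u c, a)` fix `B`, and
`σ * u * ρ` fixes `A`. -/
lemma Supported.erase [DecidableEq U] {A B : Finset U} {x : X} (hA : Supported (A : Set U) x)
    (hB : Supported (B : Set U) x) {a : U} (haB : a ∉ B) :
    Supported ((A.erase a : Finset U) : Set U) x := by
  intro u hu
  have hAB := (A ∪ B).finite_toSet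
  obtain ⟨c, hc⟩ :=
    (hAB.union (hAB.preimage (f := (u : U → U)) u.2.injOn)).infinite_compl.nonempty
  simp only [Set.mem_compl_iff, Set.mem_union, Set.mem_preimage, Finset.coe_union,
    Finset.mem_coe, not_or] at hc
  obtain ⟨⟨hcA, hcB⟩, hucA, hucB⟩ := hc
  have hρ : Minj.swap a c • x = x := hB _ fun b hb =>
    Equiv.swap_apply_of_ne_of_ne (ne_of_mem_of_not_mem hb haB) (ne_of_mem_of_not_mem hb hcB)
  have hσ : Minj.swap (u c) a • x = x := hB _ fun b hb =>
    Equiv.swap_apply_of_ne_of_ne (ne_of_mem_of_not_mem hb hucB) (ne_of_mem_of_not_mem hb haB)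
  have hσuρ : (Minj.swap (u c) a * u * Minj.swap a c) • x = x := hA _ fun b hb => by
    show Equiv.swap (u c) a (u (Equiv.swap a c b)) = b
    by_cases hba : b = a
    · subst hba
      rw [Equiv.swap_apply_left, Equiv.swap_apply_left]
    · have hbA : b ∈ A := hb
      rw [Equiv.swap_apply_of_ne_of_ne hba (ne_of_mem_of_not_mem hbA hcA),
        hu b (Finset.mem_erase.mpr ⟨hba, hbA⟩),
        Equiv.swap_apply_of_ne_of_ne (ne_of_mem_of_not_mem hbA hucA) hba]
  calc u • x = Minj.swap (u c) a • Minj.swap (u c) a • u • Minj.swap a c • x := by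
        rw [Minj.swap_smul_swap_smul, hρ]
    _ = Minj.swap (u c) a • (Minj.swap (u c) a * u * Minj.swap a c) • x := by
        simp only [mul_smul]
    _ = x := by rw [hσuρ, hσ]

lemma FinSupported.exists_supported_subset_supp {x : X} (hx : FinSupported (U := U) x) :
    ∃ A : Finset U, Supported (A : Set U) x ∧ (A : Set U) ⊆ supp x := by
  classical
  obtain ⟨A, hA, hmin⟩ := wellFounded_lt.has_min {A : Finset U | Supported (A : Set U) x} hx
  refine ⟨A, hA, fun a ha B hB => ?_⟩
  by_contra haB
  exact hmin _ (hA.erase hB haB) (Finset.erase_ssubset ha)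

lemma exists_injective_sum_avoiding {A : Set U} (hA : A.Finite) :
    ∃ e : U ⊕ U → U, Injective e ∧ ∀ p, e p ∉ A := by
  have hcompl : Cardinal.mk ↥Aᶜ = Cardinal.mk U :=
    Cardinal.mk_compl_of_infinite A (hA.lt_aleph0.trans_le (Cardinal.aleph0_le_mk U))
  have hsum : Cardinal.mk (U ⊕ U) = Cardinal.mk ↥Aᶜ := by
    rw [Cardinal.mk_sum, Cardinal.lift_id, Cardinal.add_eq_self (Cardinal.aleph0_le_mk U),
      hcompl]
  obtain ⟨f⟩ := Cardinal.eq.mp hsum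
  exact ⟨Subtype.val ∘ f, Subtype.val_injective.comp f.injective, fun p => (f p).2⟩

/-- Hilbert's hotel: `t` and `s` move the complement of `A` into two disjoint parts of it,
and `w` performs `v` on the first part only. -/
lemma exists_fixing_mul_eq {A : Set U} (hA : A.Finite) {v : Minj U}
    (hv : v ∈ fixingSubmonoid (Minj U) A) :
    ∃ s t w : Minj U, s ∈ fixingSubmonoid (Minj U) A ∧ t ∈ fixingSubmonoid (Minj U) A ∧
      w ∈ fixingSubmonoid (Minj U) A ∧ w * s = s ∧ w * t = t * v := by
  classical
  obtain ⟨e, he, heA⟩ := exists_injective_sum_avoiding hA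
  have hi : Injective (e ∘ Sum.inl) := he.comp Sum.inl_injective
  have hj : Injective (e ∘ Sum.inr) := he.comp Sum.inr_injective
  set s₀ := A.piecewise id (e ∘ Sum.inr) with hs₀
  set t₀ := A.piecewise id (e ∘ Sum.inl) with ht₀
  set w₀ := extend (e ∘ Sum.inl) (e ∘ Sum.inl ∘ v) id
  have hw₀ (m : U) (hm : ∀ n, e (.inl n) ≠ m) : w₀ m = m :=
    extend_apply' _ _ _ fun ⟨n, hn⟩ => hm n hn
  refine ⟨⟨s₀, Set.injective_piecewise_id hj fun _ => heA _⟩,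
    ⟨t₀, Set.injective_piecewise_id hi fun _ => heA _⟩,
    ⟨w₀, injective_extend_id hi (hi.comp v.2) fun n => ⟨v n, rfl⟩⟩,
    (mem_fixingSubmonoid_iff _).mpr fun a ha => Set.piecewise_eq_of_mem _ _ _ ha,
    (mem_fixingSubmonoid_iff _).mpr fun a ha => Set.piecewise_eq_of_mem _ _ _ ha,
    (mem_fixingSubmonoid_iff _).mpr fun a ha => hw₀ a fun n h => heA _ (h ▸ ha),
    Subtype.ext <| funext fun n => ?_, Subtype.ext <| funext fun n => ?_⟩
  · show w₀ (s₀ n) = s₀ n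
    by_cases hn : n ∈ A
    · rw [hs₀, Set.piecewise_eq_of_mem _ _ _ hn]
      exact hw₀ n fun k h => heA _ (h ▸ hn)
    · rw [hs₀, Set.piecewise_eq_of_notMem _ _ _ hn]
      exact hw₀ _ fun k h => Sum.inl_ne_inr (he h)
  · show w₀ (t₀ n) = t₀ (v n)
    have hvA : ∀ a ∈ A, v a = a := (mem_fixingSubmonoid_iff _).mp hv
    by_cases hn : n ∈ A
    · rw [hvA n hn, ht₀, Set.piecewise_eq_of_mem _ _ _ hn]
      exact hw₀ n fun k h => heA _ (h ▸ hn)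
    · have hvn : v n ∉ A := Injective.mapsTo_compl_of_fixed v.2 hvA hn
      rw [ht₀, Set.piecewise_eq_of_notMem _ _ _ hn, Set.piecewise_eq_of_notMem _ _ _ hvn]
      exact hi.extend_apply _ _ n

lemma MulHom.eq_one_of_fixingSubmonoid {G : Type*} [Group G] {A : Set U} (hA : A.Finite)
    (ψ : fixingSubmonoid (Minj U) A →ₙ* G) (v : fixingSubmonoid (Minj U) A) : ψ v = 1 := by
  obtain ⟨s, t, w, hs, ht, hw, hws, hwt⟩ := exists_fixing_mul_eq hA v.2
  exact ψ.map_eq_one_of_mul_eq (s := ⟨s, hs⟩) (t := ⟨t, ht⟩) (w := ⟨w, hw⟩)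
    (Subtype.ext hws) (Subtype.ext hwt)

end Infinite

namespace MCat

variable {C : Type*} [Category C] [MulAction (Minj U) C]

lemma ι_hom_comp_eqToHom (h : MCat U C) (u : Minj U) {a b : C} (p : a = b) :
    (h.ι u a).hom ≫ eqToHom (congrArg (u • ·) p) = eqToHom p ≫ (h.ι u b).hom := by
  subst p
  simp

def stabilizerAut (h : MCat U C) (x : C) :
    MulAction.stabilizerSubmonoid (Minj U) x →ₙ* Aut x where
  toFun u := h.ι u x ≪≫ eqToIso (MulAction.mem_stabilizerSubmonoid_iff.mp u.2)
  map_mul' u w := by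
    have hu := MulAction.mem_stabilizerSubmonoid_iff.mp u.2
    have hw := MulAction.mem_stabilizerSubmonoid_iff.mp w.2
    refine Iso.ext ?_
    change _ = ((h.ι w x).hom ≫ eqToHom hw) ≫ (h.ι u x).hom ≫ eqToHom hu
    simp only [Iso.trans_hom, eqToIso.hom, Category.assoc]
    rw [← Category.assoc (eqToHom hw), ← h.ι_hom_comp_eqToHom, Category.assoc,
      ← Category.assoc (h.ι w x).hom, h.ι_mul]
    simp

end MCat

end Injections

/-- If `v` fixes `supp x` elementwise and `x` is finitely supported, then `v • x = x` and
the isomorphism `ι(v,x) : x → v • x = x` is the identity of `x`. -/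
theorem stmt12 (C : Type*) [Category C] [MulAction (Minj ℕ) C] (h : MCat ℕ C)
    (x : C) (hx : FinSupported (U := ℕ) x)
    (v : Minj ℕ) (hv : ∀ a ∈ supp (U := ℕ) x, v a = a) :
    ∃ e : v • x = x, (h.ι v x).hom = eqToHom e.symm := by
  obtain ⟨A, hA, hAsupp⟩ := hx.exists_supported_subset_supp
  have hvA : ∀ a ∈ (A : Set ℕ), v a = a := fun a ha => hv a (hAsupp ha)
  have ev : v • x = x := hA v hvA
  have hψ := ((h.stabilizerAut x).comp (Submonoid.inclusion hA.fixingSubmonoid_le).toMulHom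
    ).eq_one_of_fixingSubmonoid A.finite_toSet ⟨v, (mem_fixingSubmonoid_iff _).mpr hvA⟩
  exact ⟨ev, ((comp_eqToHom_iff ev _ (𝟙 x)).mp (congrArg Iso.hom hψ)).trans
    (Category.id_comp _)⟩
end

section
/- Let G be a finite group, let ℕ^G denote the set of all functions from G to ℕ, and let X be a set with a left action of the monoid M(ℕ^G) of injective self-maps of ℕ^G. Pulling back along the monoid homomorphism M(ℕ) → M(ℕ^G), u ↦ (α ↦ u ∘ α), gives a left action of M(ℕ) on X. If x in X is supported, with respect to the M(ℕ^G)-action, on a finite subset T of ℕ^G, then x is supported, with respect to the induced M(ℕ)-action, on the finite subset I(T) = ⋃_{α ∈ T} α(G) of ℕ. In particular, if every element of X is finitely supported over ℕ^G, then every element of X is finitely supported over ℕ. (This is the content of the proposition that the G-fixed ℳ-category F^G C of a tame ℳ-category C is again tame.) -/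
open CategoryTheory

/-- Postcomposition `u ↦ (α ↦ u ∘ α)` as a monoid homomorphism `M(ℕ) →* M(ℕ^G)`. -/
def postcompMinj (G : Type) : Minj ℕ →* Minj (G → ℕ) where
  toFun u := ⟨fun α => ⇑u ∘ α, fun _ _ h => funext fun g => u.2 (congrFun h g)⟩
  map_one' := rfl
  map_mul' _ _ := rfl

theorem Supported.postcompMinj_smul_eq {G : Type} [Fintype G] {X : Type*}
    [MulAction (Minj (G → ℕ)) X] {T : Finset (G → ℕ)} {x : X}
    (hx : Supported (T : Set (G → ℕ)) x) {u : Minj ℕ}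
    (hu : ∀ a ∈ T.biUnion (fun α => Finset.image α Finset.univ), u a = a) :
    postcompMinj G u • x = x :=
  hx _ fun α hα => funext fun g =>
    hu (α g) (Finset.mem_biUnion.2 ⟨α, hα, Finset.mem_image_of_mem α (Finset.mem_univ g)⟩)

theorem stmt16_general (G : Type) [Fintype G] (X : Type*)
    [MulAction (Minj (G → ℕ)) X] :
    (∀ (x : X) (T : Finset (G → ℕ)), Supported (T : Set (G → ℕ)) x →
      ∀ u : Minj ℕ, (∀ a ∈ T.biUnion (fun α => Finset.image α Finset.univ), u a = a) →
        postcompMinj G u • x = x) ∧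
    ((∀ x : X, ∃ T : Finset (G → ℕ), Supported (T : Set (G → ℕ)) x) →
      ∀ x : X, ∃ F : Finset ℕ, ∀ u : Minj ℕ, (∀ a ∈ F, u a = a) → postcompMinj G u • x = x) := by
  refine ⟨fun _ _ hT _ hu => hT.postcompMinj_smul_eq hu, fun h x => ?_⟩
  obtain ⟨T, hT⟩ := h x
  exact ⟨_, fun _ hu => hT.postcompMinj_smul_eq hu⟩

/-- If `x` is supported on a finite subset `T` of `ℕ^G` for the `M(ℕ^G)`-action, then for the
`M(ℕ)`-action obtained by pulling back along postcomposition, `x` is supported on the finite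
subset `I(T) = ⋃_{α ∈ T} α(G)` of `ℕ`.  In particular, if every element of `X` is finitely
supported over `ℕ^G`, then every element is finitely supported over `ℕ`. -/
theorem stmt16 (G : Type) [Group G] [Fintype G] (X : Type*)
    [MulAction (Minj (G → ℕ)) X] :
    (∀ (x : X) (T : Finset (G → ℕ)), Supported (T : Set (G → ℕ)) x →
      ∀ u : Minj ℕ, (∀ a ∈ T.biUnion (fun α => Finset.image α Finset.univ), u a = a) →
        postcompMinj G u • x = x) ∧
    ((∀ x : X, ∃ T : Finset (G → ℕ), Supported (T : Set (G → ℕ)) x) →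
      ∀ x : X, ∃ F : Finset ℕ, ∀ u : Minj ℕ, (∀ a ∈ F, u a = a) → postcompMinj G u • x = x) :=
  stmt16_general G X
end

section
/- Let G be a finite group and U a countable G-set. Then U is a universal G-set if and only if every finite G-set admits a G-equivariant injection into U. -/
open MulAction

lemma orbit_finite {G : Type} [Group G] [Finite G] {U : Type} [MulAction G U] (u : U) :
    (orbit G u).Finite := Set.finite_range _

lemma aux_forward (G : Type) [Group G] [Finite G] (U : Type) [MulAction G U]
    (hU : ∀ H : Subgroup G, {u : U | stabilizer G u = H}.Infinite) :
    ∀ (n : ℕ) (A : Type) [Fintype A] [MulAction G A], Fintype.card A = n →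
      ∃ f : A → U, Function.Injective f ∧ ∀ (g : G) (a : A), f (g • a) = g • f a := by
  intro n
  induction n using Nat.strong_induction_on with
  | _ n IH =>
    intro A _ _ hcard
    rcases isEmpty_or_nonempty A with hA | hA
    · exact ⟨fun a => isEmptyElim a, fun a => isEmptyElim a, fun g a => isEmptyElim a⟩
    obtain ⟨a⟩ := hA
    classical
    -- the complement of the orbit of a is an invariant subset
    set O := orbit G a with hO
    have hsmul_mem : ∀ (g : G) {x : A}, x ∈ O → g • x ∈ O := by
      intro g x hx
      obtain ⟨h, hh⟩ := mem_orbit_iff.mp hx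
      exact mem_orbit_iff.mpr ⟨g * h, by rw [mul_smul, hh]⟩
    let sub : SubMulAction G A :=
      { carrier := Oᶜ
        smul_mem' := by
          intro g x hx hgx
          exact hx (by simpa using hsmul_mem g⁻¹ hgx) }
    letI : Fintype sub := Fintype.ofFinite _
    have hlt : Fintype.card sub < n := by
      rw [← hcard, ← Nat.card_eq_fintype_card, ← Nat.card_eq_fintype_card]
      have h2 : (Oᶜ : Set A).ncard < (Set.univ : Set A).ncard := by
        refine Set.ncard_lt_ncard ?_ Set.finite_univ
        rw [Set.ssubset_univ_iff]
        intro h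
        have ha : a ∈ Oᶜ := h.symm ▸ Set.mem_univ a
        exact ha (mem_orbit_self a)
      calc Nat.card sub = (Oᶜ : Set A).ncard := Nat.card_coe_set_eq _
        _ < _ := h2
        _ = Nat.card A := Set.ncard_univ A
    obtain ⟨f', hf'inj, hf'eq⟩ := IH _ hlt sub rfl
    -- choose a point u with stabilizer = stabilizer a, outside orbits of range f'
    set T := ⋃ b ∈ Set.range f', orbit G b with hT
    have hTfin : T.Finite :=
      Set.Finite.biUnion (Set.finite_range f') (fun b _ => orbit_finite b)
    obtain ⟨u, huS, huT⟩ := ((hU (stabilizer G a)).diff hTfin).nonempty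
    have hustab : stabilizer G u = stabilizer G a := huS
    -- key: if c • a = g • a then c • u = g • u
    have key : ∀ c g : G, c • a = g • a → c • u = g • u := by
      intro c g h
      have : g⁻¹ * c ∈ stabilizer G a := by
        rw [mem_stabilizer_iff, mul_smul, h, ← mul_smul, inv_mul_cancel, one_smul]
      rw [← hustab, mem_stabilizer_iff] at this
      calc c • u = g • ((g⁻¹ * c) • u) := by rw [← mul_smul, mul_inv_cancel_left]
        _ = g • u := by rw [this]
    let f : A → U := fun x =>
      if hx : x ∈ O then (mem_orbit_iff.mp hx).choose • u else f' ⟨x, hx⟩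
    have hf_orb : ∀ (x : A) (hx : x ∈ O) (g : G), g • a = x → f x = g • u := by
      intro x hx g hg
      have hc := (mem_orbit_iff.mp hx).choose_spec
      simp only [f, dif_pos hx]
      exact key _ _ (by rw [hc, hg])
    have hf_not : ∀ (x : A) (hx : x ∉ O), f x = f' ⟨x, hx⟩ := by
      intro x hx; simp only [f, dif_neg hx]
    refine ⟨f, ?_, ?_⟩
    · intro x₁ x₂ hx
      by_cases h1 : x₁ ∈ O <;> by_cases h2 : x₂ ∈ O
      · obtain ⟨c₁, hc₁⟩ := mem_orbit_iff.mp h1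
        obtain ⟨c₂, hc₂⟩ := mem_orbit_iff.mp h2
        rw [hf_orb x₁ h1 c₁ hc₁, hf_orb x₂ h2 c₂ hc₂] at hx
        have : c₂⁻¹ * c₁ ∈ stabilizer G u := by
          rw [mem_stabilizer_iff, mul_smul, hx, ← mul_smul, inv_mul_cancel, one_smul]
        rw [hustab, mem_stabilizer_iff] at this
        rw [← hc₁, ← hc₂]
        calc c₁ • a = c₂ • ((c₂⁻¹ * c₁) • a) := by
              rw [← mul_smul, mul_inv_cancel_left]
          _ = c₂ • a := by rw [this]
      · exfalso
        obtain ⟨c₁, hc₁⟩ := mem_orbit_iff.mp h1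
        rw [hf_orb x₁ h1 c₁ hc₁, hf_not x₂ h2] at hx
        apply huT
        refine Set.mem_biUnion (Set.mem_range_self (⟨x₂, h2⟩ : sub)) ?_
        exact mem_orbit_iff.mpr ⟨c₁⁻¹, by rw [← hx, ← mul_smul, inv_mul_cancel, one_smul]⟩
      · exfalso
        obtain ⟨c₂, hc₂⟩ := mem_orbit_iff.mp h2
        rw [hf_orb x₂ h2 c₂ hc₂, hf_not x₁ h1] at hx
        apply huT
        refine Set.mem_biUnion (Set.mem_range_self (⟨x₁, h1⟩ : sub)) ?_
        exact mem_orbit_iff.mpr ⟨c₂⁻¹, by rw [hx, ← mul_smul, inv_mul_cancel, one_smul]⟩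
      · rw [hf_not x₁ h1, hf_not x₂ h2] at hx
        exact congrArg Subtype.val (hf'inj hx)
    · intro g x
      by_cases hx : x ∈ O
      · obtain ⟨c, hc⟩ := mem_orbit_iff.mp hx
        have hgx : g • x ∈ O := hsmul_mem g hx
        rw [hf_orb x hx c hc, hf_orb (g • x) hgx (g * c) (by rw [mul_smul, hc]), mul_smul]
      · have hgx : g • x ∉ O := fun h => hx (by simpa using hsmul_mem g⁻¹ h)
        rw [hf_not x hx, hf_not (g • x) hgx]
        have : (⟨g • x, hgx⟩ : sub) = g • (⟨x, hx⟩ : sub) := rfl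
        rw [this, hf'eq]

/-- A countable `G`-set `U` is a universal `G`-set (every subgroup of `G` is the stabilizer
of infinitely many elements) if and only if every finite `G`-set admits a `G`-equivariant
injection into `U`. -/
theorem stmt17 (G : Type) [Group G] [Finite G] (U : Type) [Countable U] [MulAction G U] :
    (∀ H : Subgroup G, {u : U | MulAction.stabilizer G u = H}.Infinite) ↔
      (∀ (A : Type) [Fintype A] [MulAction G A],
        ∃ f : A → U, Function.Injective f ∧ ∀ (g : G) (a : A), f (g • a) = g • f a) := by
  constructor
  · intro hU A _ _
    exact aux_forward G U hU (Fintype.card A) A rfl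
  · intro h H
    by_contra hinf
    rw [Set.not_infinite] at hinf
    classical
    set m := hinf.toFinset.card with hm
    letI : Fintype (G ⧸ H) := Fintype.ofFinite _
    letI act : MulAction G (Fin (m + 1) × G ⧸ H) :=
      { smul := fun g p => (p.1, g • p.2)
        one_smul := fun p => by show (p.1, (1 : G) • p.2) = p; rw [one_smul]
        mul_smul := fun g₁ g₂ p => by
          show (p.1, (g₁ * g₂) • p.2) = (p.1, g₁ • g₂ • p.2); rw [mul_smul] }
    obtain ⟨f, hinj, heq⟩ := h (Fin (m + 1) × G ⧸ H)
    have hstab : ∀ i : Fin (m + 1),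
        MulAction.stabilizer G (f (i, ((1 : G) : G ⧸ H))) = H := by
      intro i
      ext g
      rw [MulAction.mem_stabilizer_iff, ← heq, hinj.eq_iff]
      show ((i, g • (((1 : G) : G ⧸ H))) : Fin (m+1) × G ⧸ H) = (i, ((1 : G) : G ⧸ H)) ↔ g ∈ H
      have h1 : g • (((1 : G) : G ⧸ H)) = ((g : G) : G ⧸ H) := by
        rw [MulAction.Quotient.smul_mk]
        simp
      rw [Prod.mk.injEq, h1, QuotientGroup.eq]
      simp
    let ι : Fin (m + 1) → hinf.toFinset := fun i =>
      ⟨f (i, ((1 : G) : G ⧸ H)), by rw [Set.Finite.mem_toFinset]; exact hstab i⟩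
    have hιinj : Function.Injective ι := by
      intro i j hij
      have := hinj (Subtype.ext_iff.mp hij)
      exact (Prod.ext_iff.mp this).1
    have := Fintype.card_le_of_injective ι hιinj
    rw [Fintype.card_fin, Fintype.card_coe] at this
    omega
end

section
/- Let G be a finite group and A a finite G-set containing an element with trivial stabilizer (that is, A has a free G-orbit). Then the set ℕ^A of all functions from A to ℕ, with G acting by (g · f)(a) = f(g⁻¹ · a), is a universal G-set. -/
/-- If the finite `G`-set `A` has an element with trivial stabilizer, then `ℕ^A`, with the
action `(g • f)(a) = f (g⁻¹ • a)`, is a universal `G`-set: it is countable, and for every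
subgroup `H` of `G` there are infinitely many functions `f : A → ℕ` whose stabilizer is
exactly `H`. -/
theorem stmt19 (G : Type) [Group G] [Finite G] (A : Type) [Fintype A] [MulAction G A]
    (a₀ : A) (ha₀ : MulAction.stabilizer G a₀ = ⊥) :
    Countable (A → ℕ) ∧
      ∀ H : Subgroup G,
        {f : A → ℕ | ∀ g : G, (fun a => f (g⁻¹ • a)) = f ↔ g ∈ H}.Infinite := by
  have hinj : ∀ x y : G, x • a₀ = y • a₀ → x = y := by
    intro x y hxy
    have : y⁻¹ * x ∈ MulAction.stabilizer G a₀ := by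
      simp [MulAction.mem_stabilizer_iff, mul_smul, hxy]
    rw [ha₀, Subgroup.mem_bot] at this
    exact (inv_mul_eq_one.mp this).symm
  refine ⟨inferInstance, fun H => ?_⟩
  classical
  obtain ⟨c, hc⟩ := (Countable.exists_injective_nat (G ⧸ H))
  set F : ℕ → A → ℕ := fun n a =>
    if h : ∃ x : G, x • a₀ = a then
      (n + 1) * (c (QuotientGroup.mk h.choose⁻¹) + 1) else 0 with hF
  have hFval : ∀ n (x : G), F n (x • a₀) = (n + 1) * (c (QuotientGroup.mk x⁻¹) + 1) := by
    intro n x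
    have h : ∃ y : G, y • a₀ = x • a₀ := ⟨x, rfl⟩
    have := hinj _ _ h.choose_spec
    simp [hF, dif_pos h, this]
  refine Set.infinite_of_injective_forall_mem (f := F) ?_ ?_
  · intro m n hmn
    have := congrFun hmn ((1 : G) • a₀)
    rw [hFval, hFval] at this
    exact Nat.succ_injective (Nat.eq_of_mul_eq_mul_right (Nat.succ_pos _) this)
  · intro n
    intro g
    constructor
    · intro h
      have := congrFun h ((1 : G) • a₀)
      have h1 : g⁻¹ • (1 : G) • a₀ = g⁻¹ • a₀ := by simp
      rw [h1] at this
      have := (hFval n g⁻¹).symm.trans (this.trans (hFval n 1))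
      have := hc (Nat.succ_injective (Nat.eq_of_mul_eq_mul_left (Nat.succ_pos _) this))
      simp only [inv_inv, inv_one] at this
      simpa using QuotientGroup.eq.mp this.symm
    · intro hg
      funext a
      by_cases h : ∃ x : G, x • a₀ = a
      · obtain ⟨x, rfl⟩ := h
        have : g⁻¹ • x • a₀ = (g⁻¹ * x) • a₀ := (mul_smul _ _ _).symm
        rw [this, hFval, hFval]
        rw [show ((QuotientGroup.mk (g⁻¹ * x)⁻¹ : G ⧸ H)) = QuotientGroup.mk x⁻¹ from by
          rw [mul_inv_rev, inv_inv]; exact QuotientGroup.mk_mul_of_mem x⁻¹ hg]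
      · have h' : ¬ ∃ x : G, x • a₀ = g⁻¹ • a := by
          rintro ⟨x, hx⟩
          exact h ⟨g * x, by rw [mul_smul, hx, smul_inv_smul]⟩
        simp [hF, dif_neg h, dif_neg h']
end
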